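/- arXiv:1408.4713 — 7 statements merged into one kernel-verified Lean document; each statement's English description precedes it below -/
import Mathlib

section
/- Let n, k be positive integers with 0 < k < n and let r be an integer with 1 ≤ r ≤ ⌊n/k⌋. If I and J are r-stable k-element subsets of [n] (i.e., every two distinct elements have circular distance at least r on the n-cycle), then the sets U(I,J) = {a₁, a₃, …, a_{2k−1}} and V(I,J) = {a₂, a₄, …, a_{2k}}, where (a₁ ≤ a₂ ≤ ⋯ ≤ a_{2k}) is the nondecreasing rearrangement of the multiset union I ∪ J, are again r-stable k-element subsets of [n]. In other words, the collection of r-stable k-subsets of [n] is sort-closed. -/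
/-- The circular distance between `i, j ∈ [n]`: `min (|i-j|) (n - |i-j|)`. -/
def circDist (n i j : ℕ) : ℕ :=
  min ((i : ℤ) - j).natAbs (n - ((i : ℤ) - j).natAbs)

/-- A subset `S ⊆ [n]` is `r`-stable if every two distinct elements have
circular distance at least `r`. -/
def RStable (n r : ℕ) (S : Finset ℕ) : Prop :=
  ∀ i ∈ S, ∀ j ∈ S, i ≠ j → r ≤ circDist n i j

/-- The nondecreasing rearrangement of the multiset union of two finsets. -/
def sortUnion (I J : Finset ℕ) : List ℕ :=
  (I.val + J.val).sort (· ≤ ·)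

/-- `U(I,J)`: the odd-indexed entries `a₁, a₃, …, a_{2k-1}` (list indices `0,2,…`). -/
def sortU (k : ℕ) (I J : Finset ℕ) : Finset ℕ :=
  ((List.range k).map (fun i => (sortUnion I J).getD (2 * i) 0)).toFinset

/-- `V(I,J)`: the even-indexed entries `a₂, a₄, …, a_{2k}` (list indices `1,3,…`). -/
def sortV (k : ℕ) (I J : Finset ℕ) : Finset ℕ :=
  ((List.range k).map (fun i => (sortUnion I J).getD (2 * i + 1) 0)).toFinset

/-!
Let `a₀ ≤ ⋯ ≤ a_{2k-1}` be the sorted union. An arc of the `n`-cycle on which any two points are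
closer than `r` contains at most one element of each of the `r`-stable sets `I`, `J`, hence at most
two entries `aₘ`. For the arc `[aₘ, aₘ + r)` this gives `aₘ + r ≤ a_{m+2}`; for the arc from `aⱼ`
round to `aᵢ`, which contains the `i + 1` entries up to `aᵢ` and all entries from `aⱼ` on, it gives
`aⱼ - aᵢ ≤ n - r` as soon as `j ≤ i + 2k - 2`. So two entries of the same parity are at linear
distance between `r` and `n - r`, i.e. at circular distance at least `r`.
-/

open Finset

lemma circDist_comm (n i j : ℕ) : circDist n i j = circDist n j i := by
  rw [circDist, circDist, ← Int.natAbs_neg, neg_sub]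

lemma le_circDist_of_add_le {n r u v : ℕ} (h₁ : u + r ≤ v) (h₂ : v ≤ u + (n - r)) :
    r ≤ circDist n u v := by
  unfold circDist
  omega

lemma RStable.card_filter_le_one {n r : ℕ} {S : Finset ℕ} (hS : RStable n r S)
    {p : ℕ → Prop} [DecidablePred p]
    (hp : ∀ u ∈ S, ∀ v ∈ S, p u → p v → u ≠ v → circDist n u v < r) :
    #(S.filter p) ≤ 1 := by
  refine card_le_one.mpr fun u hu v hv => ?_
  rw [mem_filter] at hu hv
  by_contra huv
  exact (hp u hu.1 v hv.1 hu.2 hv.2 huv).not_ge (hS u hu.1 v hv.1 huv)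

lemma rStable_image_range {n r k : ℕ} {f : ℕ → ℕ}
    (hf : ∀ i j, i < j → j < k → f i + r ≤ f j ∧ f j ≤ f i + (n - r)) :
    RStable n r ((range k).image f) := by
  simp only [RStable, mem_image, mem_range]
  rintro _ ⟨i, hi, rfl⟩ _ ⟨j, hj, rfl⟩ hne
  rcases lt_trichotomy i j with hij | rfl | hji
  · exact le_circDist_of_add_le (hf i j hij hj).1 (hf i j hij hj).2
  · exact absurd rfl hne
  · rw [circDist_comm]
    exact le_circDist_of_add_le (hf j i hji hi).1 (hf j i hji hi).2

section SortUnion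

variable {n r : ℕ} {I J : Finset ℕ}

lemma length_sortUnion (I J : Finset ℕ) : (sortUnion I J).length = #I + #J := by
  simp [sortUnion]

lemma map_getD_range_sortUnion (I J : Finset ℕ) :
    (range (#I + #J)).val.map (fun m => (sortUnion I J).getD m 0) = I.val + J.val := by
  rw [← Multiset.sort_eq (I.val + J.val) (· ≤ ·), range_val, Multiset.range, Multiset.map_coe,
    ← length_sortUnion]
  congr 1
  exact List.ext_getElem (by simp [length_sortUnion]) fun i _ h => by
    simp [sortUnion, List.getElem?_eq_getElem h]

lemma sortUnion_getD_mem {m : ℕ} (hm : m < #I + #J) : (sortUnion I J).getD m 0 ∈ I ∪ J := by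
  have hm' : m ∈ (range (#I + #J)).val := mem_range.mpr hm
  have := Multiset.mem_map_of_mem (fun m => (sortUnion I J).getD m 0) hm'
  rwa [map_getD_range_sortUnion, Multiset.mem_add, mem_val, mem_val, ← mem_union] at this

lemma sortUnion_getD_mono {i j : ℕ} (hij : i ≤ j) (hj : j < #I + #J) :
    (sortUnion I J).getD i 0 ≤ (sortUnion I J).getD j 0 := by
  have hsorted : (sortUnion I J).SortedLE :=
    List.sortedLE_iff_pairwise.mpr (Multiset.pairwise_sort _ _)
  have hlen := length_sortUnion I J
  rw [List.getD_eq_getElem _ _ (by omega), List.getD_eq_getElem _ _ (by omega)]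
  exact hsorted.getElem_le_getElem_of_le hij

lemma card_filter_range_sortUnion (I J : Finset ℕ) (p : ℕ → Prop) [DecidablePred p] :
    #{m ∈ range (#I + #J) | p ((sortUnion I J).getD m 0)} = #(I.filter p) + #(J.filter p) := by
  have := congrArg (fun s => Multiset.card (s.filter p)) (map_getD_range_sortUnion I J)
  simp only [Multiset.filter_map, Multiset.card_map, Multiset.filter_add, Multiset.card_add] at this
  exact this

lemma card_filter_range_sortUnion_le_two (hIs : RStable n r I) (hJs : RStable n r J)
    {p : ℕ → Prop} [DecidablePred p]
    (hp : ∀ u ∈ I ∪ J, ∀ v ∈ I ∪ J, p u → p v → u ≠ v → circDist n u v < r) :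
    #{m ∈ range (#I + #J) | p ((sortUnion I J).getD m 0)} ≤ 2 := by
  rw [card_filter_range_sortUnion]
  have hI := hIs.card_filter_le_one fun u hu v hv =>
    hp u (mem_union_left J hu) v (mem_union_left J hv)
  have hJ := hJs.card_filter_le_one fun u hu v hv =>
    hp u (mem_union_right I hu) v (mem_union_right I hv)
  omega

lemma sortUnion_getD_add_le (hIs : RStable n r I) (hJs : RStable n r J) {m : ℕ}
    (hm : m + 2 < #I + #J) :
    (sortUnion I J).getD m 0 + r ≤ (sortUnion I J).getD (m + 2) 0 := by
  set a := fun i => (sortUnion I J).getD i 0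
  by_contra! h
  change a (m + 2) < a m + r at h
  have hwindow : #{i ∈ range (#I + #J) | a m ≤ a i ∧ a i < a m + r} ≤ 2 :=
    card_filter_range_sortUnion_le_two hIs hJs (p := fun z => a m ≤ z ∧ z < a m + r)
      fun u _ v _ hu hv _ => by unfold circDist; omega
  have hsub : {m, m + 1, m + 2} ⊆ {i ∈ range (#I + #J) | a m ≤ a i ∧ a i < a m + r} := by
    intro i hi
    simp only [mem_insert, mem_singleton] at hi
    have h₁ : a m ≤ a i := sortUnion_getD_mono (by omega) (by omega)
    have h₂ : a i ≤ a (m + 2) := sortUnion_getD_mono (by omega) hm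
    simp only [mem_filter, mem_range]
    omega
  have := card_le_card hsub
  rw [card_insert_of_notMem (by simp), card_pair (by omega)] at this
  omega

lemma sortUnion_getD_le_add (hI : I ⊆ Icc 1 n) (hJ : J ⊆ Icc 1 n)
    (hIs : RStable n r I) (hJs : RStable n r J) {i j : ℕ} (hij : i < j) (hj : j < #I + #J)
    (hjle : j + 2 ≤ i + (#I + #J)) :
    (sortUnion I J).getD j 0 ≤ (sortUnion I J).getD i 0 + (n - r) := by
  set a := fun i => (sortUnion I J).getD i 0
  by_contra! h
  change a i + (n - r) < a j at h
  have hIJ : I ∪ J ⊆ Icc 1 n := union_subset hI hJ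
  have haj : a j ≤ n := (mem_Icc.mp (hIJ (sortUnion_getD_mem hj))).2
  have hwindow : #{m ∈ range (#I + #J) | a m ≤ a i ∨ a j ≤ a m} ≤ 2 :=
    card_filter_range_sortUnion_le_two hIs hJs (p := fun z => z ≤ a i ∨ a j ≤ z)
      fun u hu v hv _ _ _ => by
      have := mem_Icc.mp (hIJ hu)
      have := mem_Icc.mp (hIJ hv)
      unfold circDist
      omega
  have hsub : range (i + 1) ∪ Ico j (#I + #J) ⊆
      {m ∈ range (#I + #J) | a m ≤ a i ∨ a j ≤ a m} := by
    intro m hm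
    simp only [mem_union, mem_range, mem_Ico] at hm
    simp only [mem_filter, mem_range]
    rcases hm with hm | hm
    · exact ⟨by omega, .inl (sortUnion_getD_mono (by omega) (by omega))⟩
    · exact ⟨hm.2, .inr (sortUnion_getD_mono hm.1 hm.2)⟩
  have := card_le_card hsub
  rw [card_union_of_disjoint (disjoint_left.mpr fun m h₁ h₂ => by simp at h₁ h₂; omega),
    card_range, Nat.card_Ico] at this
  omega

end SortUnion

/-- `sortU` and `sortV` are `sortPart 0` and `sortPart 1`. -/
def sortPart (c k : ℕ) (I J : Finset ℕ) : Finset ℕ :=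
  ((List.range k).map (fun i => (sortUnion I J).getD (2 * i + c) 0)).toFinset

lemma sortPart_spec {n r k c : ℕ} {I J : Finset ℕ} (hr : 1 ≤ r) (hc : c ≤ 1)
    (hI : I ⊆ Icc 1 n) (hJ : J ⊆ Icc 1 n) (hIk : #I = k) (hJk : #J = k)
    (hIs : RStable n r I) (hJs : RStable n r J) :
    sortPart c k I J ⊆ Icc 1 n ∧ #(sortPart c k I J) = k ∧ RStable n r (sortPart c k I J) := by
  set f := fun i => (sortUnion I J).getD (2 * i + c) 0
  have himage : sortPart c k I J = (range k).image f := by ext; simp [sortPart, f]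
  have hgap : ∀ i j, i < j → j < k → f i + r ≤ f j ∧ f j ≤ f i + (n - r) := by
    intro i j hij hj
    exact ⟨(sortUnion_getD_add_le hIs hJs (by omega)).trans
        (sortUnion_getD_mono (by omega) (by omega)),
      sortUnion_getD_le_add hI hJ hIs hJs (by omega) (by omega) (by omega)⟩
  rw [himage]
  refine ⟨?_, ?_, rStable_image_range hgap⟩
  · simp only [image_subset_iff, mem_range]
    exact fun i hi => union_subset hI hJ (sortUnion_getD_mem (by omega))
  · have hmono : StrictMonoOn f (range k) := fun i _ j hj hij => by
      have := (hgap i j hij (mem_range.mp hj)).1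
      omega
    exact (card_image_of_injOn hmono.injOn).trans (card_range k)

theorem rStable_sort_closed_general (n k r : ℕ)
    (hr1 : 1 ≤ r)
    (I J : Finset ℕ)
    (hI : I ⊆ Finset.Icc 1 n) (hJ : J ⊆ Finset.Icc 1 n)
    (hIk : I.card = k) (hJk : J.card = k)
    (hIs : RStable n r I) (hJs : RStable n r J) :
    (sortU k I J ⊆ Finset.Icc 1 n ∧ (sortU k I J).card = k ∧ RStable n r (sortU k I J)) ∧
    (sortV k I J ⊆ Finset.Icc 1 n ∧ (sortV k I J).card = k ∧ RStable n r (sortV k I J)) :=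
  ⟨sortPart_spec hr1 zero_le_one hI hJ hIk hJk hIs hJs,
    sortPart_spec hr1 le_rfl hI hJ hIk hJk hIs hJs⟩

/-- The collection of `r`-stable `k`-subsets of `[n]` is sort-closed. -/
theorem rStable_sort_closed (n k r : ℕ) (hk : 0 < k) (hkn : k < n)
    (hr1 : 1 ≤ r) (hr2 : r ≤ n / k)
    (I J : Finset ℕ)
    (hI : I ⊆ Finset.Icc 1 n) (hJ : J ⊆ Finset.Icc 1 n)
    (hIk : I.card = k) (hJk : J.card = k)
    (hIs : RStable n r I) (hJs : RStable n r J) :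
    (sortU k I J ⊆ Finset.Icc 1 n ∧ (sortU k I J).card = k ∧ RStable n r (sortU k I J)) ∧
    (sortV k I J ⊆ Finset.Icc 1 n ∧ (sortV k I J).card = k ∧ RStable n r (sortV k I J)) :=
  rStable_sort_closed_general n k r hr1 I J hI hJ hIk hJk hIs hJs
end

section
/- For every n ≥ 3 and every r with 1 ≤ r < ⌊n/2⌋: if ε_{{ℓ, ℓ+r}} and ε_{{ℓ′, ℓ′+r}} (indices mod n) are two r-adjacent vertices lying on a common maximal simplex of the circuit triangulation of the second hypersimplex Δ_{n,2}, then the circular distance between ℓ and ℓ′ is at most r. -/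
/-- The characteristic vector (as a Boolean function on `ZMod n`) of the pair `{a, b}`. -/
def chiPair (n : ℕ) (a b : ZMod n) : ZMod n → Bool :=
  fun i => decide (i = a ∨ i = b)

/-- A directed edge of `G_{n,2}`: a `1` in position `i` with a `0` in position `i+1`
moves one step to the right. -/
def EdgeStep (n : ℕ) (ε ε' : ZMod n → Bool) : Prop :=
  ∃ i : ZMod n, ε i = true ∧ ε (i + 1) = false ∧
    ε' = Function.update (Function.update ε i false) (i + 1) true

lemma chiPair_eval {n : ℕ} {a b a' b' : ZMod n} (h : chiPair n a b = chiPair n a' b') :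
    a = a' ∨ a = b' := by
  have := congrFun h a
  simpa [chiPair] using this

lemma chiPair_eval' {n : ℕ} {a b a' b' : ZMod n} (h : chiPair n a b = chiPair n a' b') :
    b = a' ∨ b = b' := by
  have := congrFun h b
  simpa [chiPair] using this

lemma edgeStep_chiPair {n : ℕ} (hn : 3 ≤ n) {a b : ZMod n} {ε' : ZMod n → Bool}
    (hab : a ≠ b) (h : EdgeStep n (chiPair n a b) ε') :
    (ε' = chiPair n (a + 1) b ∧ a + 1 ≠ b) ∨ (ε' = chiPair n a (b + 1) ∧ a ≠ b + 1) := by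
  haveI : NeZero n := ⟨by omega⟩
  haveI : Fact (1 < n) := ⟨by omega⟩
  have hone : (1 : ZMod n) ≠ 0 := one_ne_zero
  obtain ⟨i, hi, hi1, rfl⟩ := h
  simp only [chiPair, decide_eq_true_eq] at hi
  have hi1' : ¬(i + 1 = a ∨ i + 1 = b) := by
    intro hcon
    simp [chiPair, hcon] at hi1
  push_neg at hi1'
  obtain ⟨ha1, hb1⟩ := hi1'
  have hself : ∀ x : ZMod n, ¬ (x = x + 1) := by
    intro x hx
    rw [left_eq_add] at hx
    exact hone hx
  rcases hi with rfl | rfl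
  · left
    refine ⟨funext fun p => ?_, hb1⟩
    rcases eq_or_ne p (i + 1) with rfl | hp1
    · simp [Function.update_apply, chiPair]
    · rcases eq_or_ne p i with rfl | hp2
      · simp [Function.update_apply, hp1, chiPair, hself p, hab]
      · simp [Function.update_apply, hp1, hp2, chiPair]
  · right
    have hba : i ≠ a := fun hcon => hab hcon.symm
    refine ⟨funext fun p => ?_, fun hcon => ha1 hcon.symm⟩
    rcases eq_or_ne p (i + 1) with rfl | hp1
    · simp [Function.update_apply, chiPair]
    · rcases eq_or_ne p i with rfl | hp2
      · simp [Function.update_apply, hp1, chiPair, hself p, hba]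
      · simp [Function.update_apply, hp1, hp2, chiPair]

lemma walk_chiPair {n : ℕ} (hn : 3 ≤ n) (c' : ℕ → ZMod n → Bool)
    (hstep : ∀ u, EdgeStep n (c' u) (c' (u + 1)))
    (a b : ZMod n) (s : ℕ) (hab : a ≠ b) (hs : c' s = chiPair n a b) :
    ∀ m, ∃ da db : ℕ, da + db = m ∧ (a + da) ≠ (b + db) ∧
      c' (s + m) = chiPair n (a + da) (b + db) := by
  intro m
  induction m with
  | zero => exact ⟨0, 0, rfl, by simpa using hab, by simpa using hs⟩
  | succ m ih =>
    obtain ⟨da, db, hsum, hne, hc⟩ := ih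
    have hst := hstep (s + m)
    rw [hc] at hst
    have hidx : s + (m + 1) = (s + m) + 1 := by omega
    rcases edgeStep_chiPair hn hne hst with ⟨h1, h2⟩ | ⟨h1, h2⟩
    · refine ⟨da + 1, db, by omega, ?_, ?_⟩
      · have : ((da + 1 : ℕ) : ZMod n) = (da : ZMod n) + 1 := by push_cast; ring
        rw [this, ← add_assoc]
        exact h2
      · have : ((da + 1 : ℕ) : ZMod n) = (da : ZMod n) + 1 := by push_cast; ring
        rw [hidx, this, ← add_assoc]
        exact h1
    · refine ⟨da, db + 1, by omega, ?_, ?_⟩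
      · have : ((db + 1 : ℕ) : ZMod n) = (db : ZMod n) + 1 := by push_cast; ring
        rw [this, ← add_assoc]
        exact h2
      · have : ((db + 1 : ℕ) : ZMod n) = (db : ZMod n) + 1 := by push_cast; ring
        rw [hidx, this, ← add_assoc]
        exact h1

lemma circDist_le_final (n r ℓ ℓ' u v : ℕ) (hn : 3 ≤ n) (hrn : 2 * r < n)
    (hu : u ≤ r) (hv : v ≤ r)
    (hℓ1 : 1 ≤ ℓ) (hℓn : ℓ ≤ n) (hℓ'1 : 1 ≤ ℓ') (hℓ'n : ℓ' ≤ n)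
    (h : (ℓ : ZMod n) + u = (ℓ' : ZMod n) + v) :
    circDist n ℓ ℓ' ≤ r := by
  have h' : ((ℓ + u : ℕ) : ZMod n) = ((ℓ' + v : ℕ) : ZMod n) := by push_cast; exact h
  rw [ZMod.natCast_eq_natCast_iff] at h'
  obtain ⟨k, hk⟩ := (Nat.modEq_iff_dvd).mp h'
  -- hk : ((ℓ' + v : ℕ) : ℤ) - ((ℓ + u : ℕ) : ℤ) = n * k
  push_cast at hk
  have hn0 : (0:ℤ) < (n:ℤ) := by exact_mod_cast (by omega : 0 < n)
  have c1 : (ℓ:ℤ) ≤ n := by exact_mod_cast hℓn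
  have c2 : (ℓ':ℤ) ≤ n := by exact_mod_cast hℓ'n
  have c3 : (1:ℤ) ≤ ℓ := by exact_mod_cast hℓ1
  have c4 : (1:ℤ) ≤ ℓ' := by exact_mod_cast hℓ'1
  have c5 : (u:ℤ) ≤ r := by exact_mod_cast hu
  have c6 : (v:ℤ) ≤ r := by exact_mod_cast hv
  have c7 : 2 * (r:ℤ) < n := by exact_mod_cast hrn
  have c8 : (0:ℤ) ≤ u := Int.natCast_nonneg u
  have c9 : (0:ℤ) ≤ v := Int.natCast_nonneg v
  have hk1 : k ≤ 1 := by
    by_contra hcon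
    push_neg at hcon
    have h2 : (2:ℤ) ≤ k := hcon
    have : (n:ℤ) * 2 ≤ (n:ℤ) * k := by
      exact mul_le_mul_of_nonneg_left h2 (le_of_lt hn0)
    linarith
  have hk2 : -1 ≤ k := by
    by_contra hcon
    push_neg at hcon
    have h2 : k ≤ -2 := by omega
    have : (n:ℤ) * k ≤ (n:ℤ) * (-2) := by
      exact mul_le_mul_of_nonneg_left h2 (le_of_lt hn0)
    linarith
  unfold circDist
  interval_cases k <;> omega

/-- If the `r`-adjacent vertices `ε_{{ℓ,ℓ+r}}` and `ε_{{ℓ',ℓ'+r}}` lie on a common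
maximal simplex of the circuit triangulation of `Δ_{n,2}`, i.e. on a common minimal
circuit (a closed walk of length `n`) of `G_{n,2}`, then `cd(ℓ,ℓ') ≤ r`. -/
theorem circDist_le_of_common_circuit (n r : ℕ) (hn : 3 ≤ n)
    (hr1 : 1 ≤ r) (hr2 : r < n / 2)
    (ℓ ℓ' : ℕ) (hℓ : ℓ ∈ Finset.Icc 1 n) (hℓ' : ℓ' ∈ Finset.Icc 1 n)
    (c : Fin (n + 1) → (ZMod n → Bool))
    (hclosed : c (Fin.last n) = c 0)
    (hedges : ∀ i : Fin n, EdgeStep n (c i.castSucc) (c i.succ))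
    (hv : ∃ i, c i = chiPair n (ℓ : ZMod n) ((ℓ : ZMod n) + r))
    (hv' : ∃ i, c i = chiPair n (ℓ' : ZMod n) ((ℓ' : ZMod n) + r)) :
    circDist n ℓ ℓ' ≤ r := by
  haveI : NeZero n := ⟨by omega⟩
  rw [Finset.mem_Icc] at hℓ hℓ'
  have hrn : 2 * r < n := by omega
  set c' : ℕ → ZMod n → Bool :=
    fun u => c ⟨u % n, Nat.lt_succ_of_lt (Nat.mod_lt _ (by omega))⟩ with hc'
  have hci : ∀ i : Fin (n + 1), c' i.val = c i := by
    intro i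
    rcases Nat.lt_or_ge i.val n with h | h
    · exact congrArg c (Fin.ext (by simp [Nat.mod_eq_of_lt h]))
    · have hval : i.val = n := by omega
      have hi : i = Fin.last n := Fin.ext (by simpa using hval)
      rw [hi, hclosed]
      exact congrArg c (Fin.ext (by simp [hval]))
  have hper : ∀ u, c' (u + n) = c' u := by
    intro u
    exact congrArg c (Fin.ext (by simp [Nat.add_mod_right]))
  have hstep : ∀ u, EdgeStep n (c' u) (c' (u + 1)) := by
    intro u
    have hk : u % n < n := Nat.mod_lt _ (by omega)
    have h := hedges ⟨u % n, hk⟩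
    have e1 : c' u = c (Fin.castSucc ⟨u % n, hk⟩) := congrArg c (Fin.ext rfl)
    have hmod : (u + 1) % n = (u % n + 1) % n := by
      rw [Nat.add_mod, Nat.mod_eq_of_lt (show (1:ℕ) < n by omega)]
    have e2 : c' (u + 1) = c (Fin.succ ⟨u % n, hk⟩) := by
      rcases Nat.lt_or_ge (u % n + 1) n with h2 | h2
      · exact congrArg c (Fin.ext (by
          show (u + 1) % n = u % n + 1
          rw [hmod, Nat.mod_eq_of_lt h2]))
      · have h3 : u % n + 1 = n := by omega
        have h4 : (u + 1) % n = 0 := by rw [hmod, h3, Nat.mod_self]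
        have h5 : Fin.succ ⟨u % n, hk⟩ = Fin.last n := Fin.ext (by simp [h3])
        rw [h5, hclosed]
        exact congrArg c (Fin.ext (by simp [h4]))
    rw [e1, e2]
    exact h
  -- starting times
  obtain ⟨is, hvs⟩ := hv
  obtain ⟨it, hvt⟩ := hv'
  set s := is.val with hsdef
  set t := it.val with htdef
  have hs : c' s = chiPair n (ℓ : ZMod n) ((ℓ : ZMod n) + r) := (hci is).trans hvs
  have ht : c' t = chiPair n (ℓ' : ZMod n) ((ℓ' : ZMod n) + r) := (hci it).trans hvt
  have hsn : s ≤ n := Nat.lt_succ_iff.mp is.isLt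
  have htn : t ≤ n := Nat.lt_succ_iff.mp it.isLt
  set t₀ := if s ≤ t then t else t + n with ht₀def
  have ht₀ : c' t₀ = chiPair n (ℓ' : ZMod n) ((ℓ' : ZMod n) + r) := by
    rw [ht₀def]
    split
    · exact ht
    · rw [hper]; exact ht
  have hst₀ : s ≤ t₀ ∧ t₀ ≤ s + n := by
    rw [ht₀def]; split <;> omega
  set m := t₀ - s with hmdef
  have hmn : m ≤ n := by omega
  have hrne : ((r : ZMod n)) ≠ 0 := by
    intro h
    rw [ZMod.natCast_eq_zero_iff] at h
    have := Nat.le_of_dvd (by omega) h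
    omega
  have hab : (ℓ : ZMod n) ≠ (ℓ : ZMod n) + r := by
    intro h
    exact hrne (by simpa using h.symm)
  obtain ⟨da₁, db₁, hsum₁, hne₁, hc₁⟩ := walk_chiPair hn c' hstep _ _ s hab hs m
  have hidx₁ : s + m = t₀ := by omega
  rw [hidx₁] at hc₁
  have hmid : chiPair n (ℓ' : ZMod n) ((ℓ' : ZMod n) + r)
      = chiPair n ((ℓ : ZMod n) + da₁) ((ℓ : ZMod n) + r + db₁) := ht₀.symm.trans hc₁
  obtain ⟨da₂, db₂, hsum₂, hne₂, hc₂⟩ := walk_chiPair hn c' hstep _ _ t₀ hne₁ hc₁ (n - m)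
  have hidx₂ : t₀ + (n - m) = s + n := by omega
  rw [hidx₂, hper, hs] at hc₂
  -- closure analysis
  set D := da₁ + da₂ with hDdef
  have hcastD : ((ℓ : ZMod n) + da₁) + da₂ = (ℓ : ZMod n) + (D : ZMod n) := by
    simp only [hDdef]; push_cast; ring
  have hDn : D ≤ n := by omega
  have hda₁D : da₁ ≤ D := by omega
  have hEzero : D = n → db₁ = 0 := by intro h; omega
  have heval := chiPair_eval hc₂.symm
  rw [hcastD] at heval
  -- heval : ℓ + D = ℓ ∨ ℓ + D = ℓ + r
  have hDcase : (D : ZMod n) = 0 ∨ (D : ZMod n) = (r : ZMod n) := by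
    rcases heval with h | h
    · left
      have := add_left_cancel (a := (ℓ : ZMod n)) (by rw [h, add_zero] : (ℓ : ZMod n) + D = (ℓ:ZMod n) + 0)
      exact this
    · right
      exact add_left_cancel h
  have key : ∃ u₀ v₀ : ℕ, u₀ ≤ r ∧ v₀ ≤ r ∧ (ℓ : ZMod n) + u₀ = (ℓ' : ZMod n) + v₀ := by
    rcases hDcase with hD | hD
    · rw [ZMod.natCast_eq_zero_iff] at hD
      rcases Nat.eq_zero_or_pos D with h0 | hpos
      · -- D = 0, da₁ = 0
        have hda : da₁ = 0 := by omega
        have := chiPair_eval hmid.symm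
        rw [hda] at this
        simp only [Nat.cast_zero, add_zero] at this
        rcases this with h | h
        · exact ⟨0, 0, by omega, by omega, by simpa using h⟩
        · exact ⟨0, r, by omega, le_refl r, by simpa using h⟩
      · have hDn' : D = n := le_antisymm hDn (Nat.le_of_dvd hpos hD)
        have hdb : db₁ = 0 := hEzero hDn'
        have := chiPair_eval' hmid.symm
        rw [hdb] at this
        simp only [Nat.cast_zero, add_zero] at this
        rcases this with h | h
        · exact ⟨r, 0, le_refl r, by omega, by simpa using h⟩
        · exact ⟨r, r, le_refl r, le_refl r, by simpa using h⟩
    · -- D ≡ r, so D = r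
      rw [ZMod.natCast_eq_natCast_iff] at hD
      have hDr : D = r := by
        rcases Nat.lt_or_ge D n with hlt | hge
        · have : D % n = r % n := hD
          rwa [Nat.mod_eq_of_lt hlt, Nat.mod_eq_of_lt (by omega)] at this
        · have hDn' : D = n := by omega
          have : D % n = r % n := hD
          rw [hDn', Nat.mod_self, Nat.mod_eq_of_lt (by omega)] at this
          omega
      have hda₁r : da₁ ≤ r := by omega
      have := chiPair_eval hmid.symm
      rcases this with h | h
      · exact ⟨da₁, 0, hda₁r, by omega, by simpa using h⟩
      · exact ⟨da₁, r, hda₁r, le_refl r, by simpa using h⟩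
  obtain ⟨u₀, v₀, hu₀, hv₀, hkey⟩ := key
  exact circDist_le_final n r ℓ ℓ' u₀ v₀ hn hrn hu₀ hv₀ hℓ.1 hℓ.2 hℓ'.1 hℓ'.2 hkey
end

section
/- Let n = 2r + 3 be odd with r ≥ 1. Then 1 + x·(Σ_{i=0}^{r−1}(1+x)^i + 3(1+x)^r + Σ_{i=0}^{r−2}(1+x)^i·F_{2r−2i}(x) + F_{2r+1}(x)) = L_n(x), where F_m and L_m are the Fibonacci and Lucas polynomials. (This identity shows the two formulas for the h*-polynomial of the (⌊n/2⌋−1)-stable second hypersimplex agree.) -/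
open Polynomial

/-- The Fibonacci polynomials: `F₀ = 1`, `F₁ = 1`, `Fₙ = Fₙ₋₁ + x·Fₙ₋₂`. -/
noncomputable def fibPoly : ℕ → Polynomial ℤ
  | 0 => 1
  | 1 => 1
  | n + 2 => fibPoly (n + 1) + X * fibPoly n

/-- The Lucas polynomials: `L₀ = 2`, `L₁ = 1`, `Lₙ = Lₙ₋₁ + x·Lₙ₋₂`. -/
noncomputable def lucasPoly : ℕ → Polynomial ℤ
  | 0 => 2
  | 1 => 1
  | n + 2 => lucasPoly (n + 1) + X * lucasPoly n

lemma fibPoly_step (n : ℕ) : fibPoly (n + 2) = fibPoly (n + 1) + X * fibPoly n := rfl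

lemma lucasPoly_step (n : ℕ) : lucasPoly (n + 2) = lucasPoly (n + 1) + X * lucasPoly n := rfl

lemma fibPoly_step3 (n : ℕ) :
    fibPoly (n + 3) = (1 + X) * fibPoly (n + 1) + X * fibPoly n := by
  rw [show n + 3 = (n + 1) + 2 from rfl, fibPoly_step, fibPoly_step]; ring

lemma lucasPoly_step3 (n : ℕ) :
    lucasPoly (n + 3) = (1 + X) * lucasPoly (n + 1) + X * lucasPoly n := by
  rw [show n + 3 = (n + 1) + 2 from rfl, lucasPoly_step, lucasPoly_step]; ring

lemma lucas_eq_fib (n : ℕ) : lucasPoly (n + 2) = fibPoly (n + 2) + X * fibPoly n := by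
  induction n using Nat.twoStepInduction with
  | zero =>
      rw [lucasPoly_step, fibPoly_step]
      show (1 : Polynomial ℤ) + X * 2 = 1 + X * 1 + X * 1; ring
  | one =>
      rw [lucasPoly_step, fibPoly_step, lucasPoly_step, fibPoly_step]
      show (1 : Polynomial ℤ) + X * 2 + X * 1 = 1 + X * 1 + X * 1 + X * 1; ring
  | more n ih1 ih2 =>
      have ih2' : lucasPoly (n + 3) = fibPoly (n + 3) + X * fibPoly (n + 1) := ih2
      linear_combination (lucasPoly_step (n + 2)) - (fibPoly_step (n + 2)) + ih2'
        + X * ih1 - X * (fibPoly_step n)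

lemma geom_aux (r : ℕ) :
    X * (∑ i ∈ Finset.range r, ((1 : Polynomial ℤ) + X) ^ i) = (1 + X) ^ r - 1 := by
  have h := geom_sum_mul ((1 : Polynomial ℤ) + X) r
  linear_combination h

lemma B_step (r : ℕ) (hr : 1 ≤ r) :
    (∑ i ∈ Finset.range (r + 1 - 1), ((1 : Polynomial ℤ) + X) ^ i * fibPoly (2 * (r + 1) - 2 * i))
      = fibPoly (2 * r + 2)
        + (1 + X) * ∑ i ∈ Finset.range (r - 1), (1 + X) ^ i * fibPoly (2 * r - 2 * i) := by
  obtain ⟨s, rfl⟩ : ∃ s, r = s + 1 := ⟨r - 1, (Nat.succ_pred_eq_of_pos hr).symm⟩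
  rw [show s + 1 + 1 - 1 = s + 1 from rfl, Finset.sum_range_succ']
  rw [show s + 1 - 1 = s from rfl]
  have h1 : ∀ i ∈ Finset.range s,
      ((1 : Polynomial ℤ) + X) ^ (i + 1) * fibPoly (2 * (s + 1 + 1) - 2 * (i + 1))
        = (1 + X) * ((1 + X) ^ i * fibPoly (2 * (s + 1) - 2 * i)) := by
    intro i hi
    have : 2 * (s + 1 + 1) - 2 * (i + 1) = 2 * (s + 1) - 2 * i := by omega
    rw [this, pow_succ]; ring
  rw [Finset.sum_congr rfl h1, ← Finset.mul_sum]
  have h2 : 2 * (s + 1 + 1) - 2 * 0 = 2 * (s + 1) + 2 := by omega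
  rw [h2, pow_zero, one_mul]
  ring

/-- For odd `n = 2r + 3` with `r ≥ 1`,
`1 + x (Σ_{i=0}^{r-1} (1+x)^i + 3(1+x)^r + Σ_{i=0}^{r-2} (1+x)^i F_{2r-2i}(x) + F_{2r+1}(x))
  = Lₙ(x)`. -/
theorem hstar_formula_eq_lucas (r : ℕ) (hr : 1 ≤ r) :
    1 + X * ((∑ i ∈ Finset.range r, (1 + X) ^ i)
        + 3 * (1 + X) ^ r
        + (∑ i ∈ Finset.range (r - 1), (1 + X) ^ i * fibPoly (2 * r - 2 * i))
        + fibPoly (2 * r + 1)) =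
      lucasPoly (2 * r + 3) := by
  induction r, hr using Nat.le_induction with
  | base =>
      simp only [Finset.sum_range_one, show (1:ℕ) - 1 = 0 from rfl, Finset.range_zero,
        Finset.sum_empty, pow_zero, pow_one]
      rw [show 2 * 1 + 1 = 3 from rfl, show 2 * 1 + 3 = 5 from rfl,
        show (3:ℕ) = 1 + 2 from rfl, fibPoly_step,
        show (5:ℕ) = 3 + 2 from rfl, lucasPoly_step,
        show (3:ℕ) = 1 + 2 from rfl, lucasPoly_step, lucasPoly_step,
        fibPoly_step]
      show (1 : Polynomial ℤ) + X * (1 + 3 * (1 + X) + 0 + (1 + X * 1 + X * 1)) =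
        1 + X * 2 + X * 1 + X * (1 + X * 2) + X * (1 + X * 2 + X * 1)
      ring
  | succ r hr ih =>
      rw [Finset.sum_range_succ, B_step r hr,
        show 2 * (r + 1) + 1 = 2 * r + 3 from by ring, fibPoly_step3 (2 * r),
        show 2 * (r + 1) + 3 = 2 * r + 2 + 3 from by ring, lucasPoly_step3,
        show 2 * r + 2 + 1 = 2 * r + 3 from rfl]
      have hlf := lucas_eq_fib (2 * r)
      have hg := geom_aux r
      linear_combination (1 + X) * ih - X * hg - X * hlf
end

section
/- For every n ≥ 3, the coefficient sequence of the n-th Lucas polynomial L_n(x) = Σ_{m=0}^{⌊n/2⌋} a_m x^m, where a_m = (n/(n−m))·C(n−m, m), is log-concave (a_m² ≥ a_{m−1}·a_{m+1} for all valid m) and hence unimodal. -/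
/-!
Clearing the denominator `n - m` turns the binomial identities into the ratio recurrence
`a_{m+1} (m+1)(n-m-1) = a_m (n-2m)(n-2m-1)`. On `2m + 2 ≤ n` the numerator of the ratio
`(n-2m)(n-2m-1) / ((m+1)(n-m-1))` decreases and its denominator increases, so the ratios
decrease: that is log-concavity. A positive log-concave sequence is unimodal, because
`a_{i+1} ≤ a_i` together with `a_i a_{i+2} ≤ a_{i+1}²` forces `a_{i+2} ≤ a_{i+1}`.
-/

/-- The `m`-th coefficient of the `n`-th Lucas polynomial:
`a_m = (n/(n-m))·C(n-m, m)` (an exact natural-number division). -/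
def lucasCoeff (n m : ℕ) : ℕ :=
  n * (n - m).choose m / (n - m)

section LogConcave

variable {R : Type*} [CommSemiring R] [LinearOrder R] [IsStrictOrderedRing R]

theorem mul_le_mul_self_of_ratio_le {a p q : ℕ → R} (k : ℕ)
    (hk : a (k + 1) * q k = a k * p k) (hk1 : a (k + 2) * q (k + 1) = a (k + 1) * p (k + 1))
    (hpq : p (k + 1) * q k ≤ p k * q (k + 1)) (hpos : 0 < p k * q (k + 1))
    (ha : 0 ≤ a (k + 1)) :
    a k * a (k + 2) ≤ a (k + 1) * a (k + 1) := by
  have key : a k * a (k + 2) * (p k * q (k + 1)) = a (k + 1) * a (k + 1) * (p (k + 1) * q k) :=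
    calc a k * a (k + 2) * (p k * q (k + 1))
        = (a k * p k) * (a (k + 2) * q (k + 1)) := by ring
      _ = (a (k + 1) * q k) * (a (k + 1) * p (k + 1)) := by rw [hk, hk1]
      _ = a (k + 1) * a (k + 1) * (p (k + 1) * q k) := by ring
  refine le_of_mul_le_mul_right ?_ hpos
  rw [key]
  exact mul_le_mul_of_nonneg_left hpq (mul_nonneg ha ha)

theorem exists_unimodal_of_mul_le_mul_self {a : ℕ → R} {N : ℕ} (hpos : ∀ i ≤ N, 0 < a i)
    (hlc : ∀ i, i + 2 ≤ N → a i * a (i + 2) ≤ a (i + 1) * a (i + 1)) :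
    ∃ j ≤ N, (∀ i < j, a i ≤ a (i + 1)) ∧ (∀ i, j ≤ i → i + 1 ≤ N → a (i + 1) ≤ a i) := by
  classical
  have hex : ∃ j, N ≤ j ∨ a (j + 1) ≤ a j := ⟨N, Or.inl le_rfl⟩
  refine ⟨Nat.find hex, Nat.find_min' hex (Or.inl le_rfl), fun i hi => ?_, fun i hji hiN => ?_⟩
  · exact (not_le.mp (not_or.mp (Nat.find_min hex hi)).2).le
  induction i, hji using Nat.le_induction with
  | base => exact (Nat.find_spec hex).resolve_left (by omega)
  | succ i hji ih =>
    have hsq : a (i + 1) * a (i + 1) ≤ a i * a (i + 1) :=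
      mul_le_mul_of_nonneg_right (ih (by omega)) (hpos (i + 1) (by omega)).le
    exact le_of_mul_le_mul_left ((hlc i (by omega)).trans hsq) (hpos i (by omega))

end LogConcave

theorem sub_dvd_mul_choose (n m : ℕ) : n - m ∣ n * (n - m).choose m := by
  rcases m with _ | k
  · simp
  rcases h : n - (k + 1) with _ | N
  · simp
  have hn : n = N + 1 + (k + 1) := by omega
  -- the quotient is the cycle count `C(n-m, m) + C(n-m-1, m-1)`
  refine ⟨(N + 1).choose (k + 1) + N.choose k, ?_⟩
  rw [hn, mul_add, Nat.add_one_mul_choose_eq N k]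
  ring

theorem lucasCoeff_mul_sub (n m : ℕ) : lucasCoeff n m * (n - m) = n * (n - m).choose m :=
  Nat.div_mul_cancel (sub_dvd_mul_choose n m)

theorem lucasCoeff_pos {n m : ℕ} (hn : 0 < n) (hm : 2 * m ≤ n) : 0 < lucasCoeff n m := by
  have h : 0 < lucasCoeff n m * (n - m) := by
    rw [lucasCoeff_mul_sub]
    exact Nat.mul_pos hn (Nat.choose_pos (by omega))
  exact Nat.pos_of_mul_pos_right h

theorem lucasCoeff_succ_mul {n m : ℕ} (h : 2 * m + 2 ≤ n) :
    lucasCoeff n (m + 1) * ((m + 1) * (n - m - 1)) =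
      lucasCoeff n m * ((n - 2 * m) * (n - 2 * m - 1)) := by
  obtain ⟨r, rfl⟩ : ∃ r, n = 2 * m + 2 + r := ⟨n - (2 * m + 2), by omega⟩
  set n := 2 * m + 2 + r
  have e₁ : n - (m + 1) = m + 1 + r := by omega
  have e₀ : n - m = m + 1 + r + 1 := by omega
  have h₁ := lucasCoeff_mul_sub n (m + 1)
  have h₀ := lucasCoeff_mul_sub n m
  rw [e₁] at h₁
  rw [e₀] at h₀
  have c₁ := Nat.choose_succ_right_eq (m + 1 + r) m
  have c₂ := Nat.choose_mul_succ_eq (m + 1 + r) m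
  rw [show m + 1 + r - m = r + 1 by omega] at c₁
  rw [show m + 1 + r + 1 - m = r + 2 by omega] at c₂
  rw [show n - m - 1 = m + 1 + r by omega, show n - 2 * m = r + 2 by omega,
    show r + 2 - 1 = r + 1 by omega]
  refine Nat.eq_of_mul_eq_mul_right (show 0 < m + 1 + r + 1 by omega) ?_
  calc lucasCoeff n (m + 1) * ((m + 1) * (m + 1 + r)) * (m + 1 + r + 1)
      = lucasCoeff n (m + 1) * (m + 1 + r) * (m + 1) * (m + 1 + r + 1) := by ring
    _ = n * ((m + 1 + r).choose m * (m + 1 + r + 1)) * (r + 1) := by rw [h₁, mul_assoc n, c₁]; ring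
    _ = lucasCoeff n m * (m + 1 + r + 1) * ((r + 2) * (r + 1)) := by rw [c₂, h₀]; ring
    _ = lucasCoeff n m * ((r + 2) * (r + 1)) * (m + 1 + r + 1) := by ring

theorem lucasCoeff_mul_le_mul_self {n k : ℕ} (h : 2 * k + 4 ≤ n) :
    lucasCoeff n k * lucasCoeff n (k + 2) ≤ lucasCoeff n (k + 1) * lucasCoeff n (k + 1) := by
  refine mul_le_mul_self_of_ratio_le (p := fun k => (n - 2 * k) * (n - 2 * k - 1))
    (q := fun k => (k + 1) * (n - k - 1)) k (lucasCoeff_succ_mul (by omega))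
    (lucasCoeff_succ_mul (by omega)) ?_ ?_ (Nat.zero_le _)
  · obtain ⟨s, hs⟩ : ∃ s, n - k - 1 = s + 1 := ⟨n - k - 2, by omega⟩
    have hks : k + 1 ≤ s := by omega
    rw [show n - (k + 1) - 1 = s by omega]
    simp only [hs]
    refine Nat.mul_le_mul (Nat.mul_le_mul (by omega) (by omega)) ?_
    nlinarith
  · exact Nat.mul_pos (Nat.mul_pos (by omega) (by omega)) (Nat.mul_pos (by omega) (by omega))

/-- For `n ≥ 3`, the coefficient sequence `a_m = (n/(n-m))·C(n-m,m)` of the `n`-th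
Lucas polynomial is log-concave on `0 ≤ m ≤ ⌊n/2⌋`, and hence unimodal. -/
theorem lucasCoeff_log_concave_and_unimodal (n : ℕ) (hn : 3 ≤ n) :
    (∀ m, 1 ≤ m → m + 1 ≤ n / 2 →
      lucasCoeff n (m - 1) * lucasCoeff n (m + 1) ≤ lucasCoeff n m * lucasCoeff n m) ∧
    ∃ j ≤ n / 2,
      (∀ i, 1 ≤ i → i ≤ j → lucasCoeff n (i - 1) ≤ lucasCoeff n i) ∧
      (∀ i, j ≤ i → i + 1 ≤ n / 2 → lucasCoeff n (i + 1) ≤ lucasCoeff n i) := by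
  have hlc : ∀ k, k + 2 ≤ n / 2 →
      lucasCoeff n k * lucasCoeff n (k + 2) ≤ lucasCoeff n (k + 1) * lucasCoeff n (k + 1) :=
    fun k hk => lucasCoeff_mul_le_mul_self (by omega)
  obtain ⟨j, hjn, hinc, hdec⟩ :=
    exists_unimodal_of_mul_le_mul_self (fun i hi => lucasCoeff_pos (by omega) (by omega)) hlc
  refine ⟨fun m hm hmn => ?_, j, hjn, fun i hi hij => ?_, hdec⟩
  · obtain ⟨k, rfl⟩ : ∃ k, m = k + 1 := ⟨m - 1, by omega⟩
    exact hlc k (by omega)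
  · obtain ⟨k, rfl⟩ : ∃ k, i = k + 1 := ⟨i - 1, by omega⟩
    exact hinc k (by omega)
end

section
/- Let n ≥ 6 be odd. Define h* coefficients by h₀ = 1, h₁ = C(n,2) − 2n, h₂ = C(n,4) − n(n−4), and hᵢ = C(n, 2i) for 3 ≤ i ≤ ⌊n/2⌋ (and hᵢ = 0 for i > ⌊n/2⌋). Then for n ≥ 9 this sequence is unimodal: h₀ ≤ h₁ ≤ h₂ and there is an index j with hᵢ₋₁ ≤ hᵢ for i ≤ j and hᵢ ≥ hᵢ₊₁ for i ≥ j. (This is the h*-vector of the 2-stable second hypersimplex Δ_{n,2}^{stab(2)}.) -/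
/-! From `h₃` on the sequence is `C(n, 2i)`, which rises while `4i ≤ n + 2` and falls once
`n ≤ 4i + 2` by the unimodality and symmetry of binomial coefficients, so the peak can be taken at
`max 3 ⌊(n + 2)/4⌋`. The first three steps are polynomial inequalities in `n`; the step `h₂ ≤ h₃`
follows from `C(n,4) ≤ C(n,6)` for `n ≥ 10`, and `n = 9` is checked directly. -/

/-- The h*-vector of the 2-stable second hypersimplex `Δ_{n,2}^{stab(2)}`:
`h₀ = 1`, `h₁ = C(n,2) − 2n`, `h₂ = C(n,4) − n(n−4)`, `hᵢ = C(n,2i)` for `i ≥ 3`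
(which vanishes for `i > ⌊n/2⌋`). -/
def hTwoStable (n : ℕ) : ℕ → ℤ
  | 0 => 1
  | 1 => (n.choose 2 : ℤ) - 2 * n
  | 2 => (n.choose 4 : ℤ) - n * ((n : ℤ) - 4)
  | i => (n.choose (2 * i) : ℤ)

open Nat

theorem Nat.choose_le_choose_of_le_of_two_mul_le {n a b : ℕ} (hab : a ≤ b) (hb : 2 * b ≤ n) :
    n.choose a ≤ n.choose b := by
  induction b, hab using Nat.le_induction with
  | base => rfl
  | succ b _ ih => exact (ih (by omega)).trans (choose_le_succ_of_lt_half_left (by omega))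

theorem Nat.choose_le_choose_of_le_of_add_le {n a b : ℕ} (hab : a ≤ b) (h : a + b ≤ n) :
    n.choose a ≤ n.choose b := by
  rcases le_or_gt (2 * b) n with hb | hb
  · exact choose_le_choose_of_le_of_two_mul_le hab hb
  · rw [← choose_symm (show b ≤ n by omega)]
    exact choose_le_choose_of_le_of_two_mul_le (by omega) (by omega)

theorem Nat.choose_le_choose_of_le_of_le_add {n a b : ℕ} (hab : a ≤ b) (h : n ≤ a + b) :
    n.choose b ≤ n.choose a := by
  rcases le_or_gt b n with hb | hb
  · rw [← choose_symm hb]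
    exact choose_le_choose_of_le_of_add_le (by omega) (by omega)
  · simp [choose_eq_zero_of_lt hb]

theorem natCast_choose_two_mul_two (n : ℕ) : (n.choose 2 : ℤ) * 2 = n * (n - 1) := by
  have h := cast_descFactorial_two (S := ℤ) n
  rw [descFactorial_eq_factorial_mul_choose] at h
  push_cast [factorial] at h
  linear_combination h

theorem natCast_choose_four_mul_24 (n : ℕ) :
    (n.choose 4 : ℤ) * 24 = n * (n - 1) * (n - 2) * (n - 3) := by
  have h := descPochhammer_eval_eq_descFactorial ℤ n 4
  rw [descFactorial_eq_factorial_mul_choose] at h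
  simp only [descPochhammer_succ_eval, descPochhammer_zero, Polynomial.eval_one] at h
  push_cast [factorial] at h
  linear_combination -h

theorem hTwoStable_of_three_le {n i : ℕ} (hi : 3 ≤ i) : hTwoStable n i = n.choose (2 * i) := by
  obtain ⟨k, rfl⟩ : ∃ k, i = k + 3 := ⟨i - 3, by omega⟩
  rfl

theorem hTwoStable_zero_le_one {n : ℕ} (hn : 6 ≤ n) : hTwoStable n 0 ≤ hTwoStable n 1 := by
  have hn' : (6 : ℤ) ≤ n := by exact_mod_cast hn
  have := natCast_choose_two_mul_two n
  simp only [hTwoStable]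
  nlinarith

-- `24 (h₂ - h₁) = n (n - 5) (n - 6) (n + 5)`, and `(n - 5) (n - 6) ≥ 0` for every integer `n`.
theorem hTwoStable_one_le_two (n : ℕ) : hTwoStable n 1 ≤ hTwoStable n 2 := by
  have h56 : 0 ≤ ((n : ℤ) - 5) * (n - 6) := by
    rcases le_or_gt n 5 with h | h
    · exact mul_nonneg_of_nonpos_of_nonpos (by omega) (by omega)
    · exact mul_nonneg (by omega) (by omega)
  have := natCast_choose_two_mul_two n
  have := natCast_choose_four_mul_24 n
  simp only [hTwoStable]
  nlinarith [mul_nonneg (by positivity : (0 : ℤ) ≤ n * (n + 5)) h56]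

theorem hTwoStable_two_le_three {n : ℕ} (hn : 9 ≤ n) : hTwoStable n 2 ≤ hTwoStable n 3 := by
  rcases hn.eq_or_lt with rfl | hn
  · decide
  have h46 : (n.choose 4 : ℤ) ≤ n.choose 6 := by
    exact_mod_cast choose_le_choose_of_le_of_add_le (by omega) (by omega)
  have : (0 : ℤ) ≤ n * (n - 4) := mul_nonneg (by omega) (by omega)
  simp only [hTwoStable]
  linarith

theorem hTwoStable_pred_le {n i : ℕ} (hi : 4 ≤ i) (h : 4 * i ≤ n + 2) :
    hTwoStable n (i - 1) ≤ hTwoStable n i := by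
  rw [hTwoStable_of_three_le (by omega), hTwoStable_of_three_le (by omega)]
  exact_mod_cast choose_le_choose_of_le_of_add_le (by omega) (by omega)

theorem hTwoStable_succ_le {n i : ℕ} (hi : 3 ≤ i) (h : n ≤ 4 * i + 2) :
    hTwoStable n (i + 1) ≤ hTwoStable n i := by
  rw [hTwoStable_of_three_le (by omega), hTwoStable_of_three_le hi]
  exact_mod_cast choose_le_choose_of_le_of_le_add (by omega) (by omega)

theorem hTwoStable_unimodal_general (n : ℕ) (hn : 9 ≤ n) :
    hTwoStable n 0 ≤ hTwoStable n 1 ∧ hTwoStable n 1 ≤ hTwoStable n 2 ∧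
    ∃ j, (∀ i, 1 ≤ i → i ≤ j → hTwoStable n (i - 1) ≤ hTwoStable n i) ∧
         (∀ i, j ≤ i → hTwoStable n (i + 1) ≤ hTwoStable n i) := by
  have h01 := hTwoStable_zero_le_one (by omega : 6 ≤ n)
  have h12 := hTwoStable_one_le_two n
  refine ⟨h01, h12, max 3 ((n + 2) / 4), ?_, ?_⟩
  · rintro (_ | _ | _ | _ | i) hi hij
    · omega
    · exact h01
    · exact h12
    · exact hTwoStable_two_le_three hn
    · exact hTwoStable_pred_le (by omega) (by omega)
  · intro i hij
    exact hTwoStable_succ_le (by omega) (by omega)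

/-- For odd `n ≥ 9`, the h*-vector of `Δ_{n,2}^{stab(2)}` is unimodal:
`h₀ ≤ h₁ ≤ h₂` and there is an index `j` with `hᵢ₋₁ ≤ hᵢ` for `i ≤ j` and
`hᵢ ≥ hᵢ₊₁` for `i ≥ j`. -/
theorem hTwoStable_unimodal (n : ℕ) (hodd : Odd n) (hn : 9 ≤ n) :
    hTwoStable n 0 ≤ hTwoStable n 1 ∧ hTwoStable n 1 ≤ hTwoStable n 2 ∧
    ∃ j, (∀ i, 1 ≤ i → i ≤ j → hTwoStable n (i - 1) ≤ hTwoStable n i) ∧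
         (∀ i, j ≤ i → hTwoStable n (i + 1) ≤ hTwoStable n i) :=
  hTwoStable_unimodal_general n hn
end

section
/- Let n ≥ 9 be odd. Define h₀ = 1, h₁ = C(n,2) − 3n, h₂ = C(n,4) − (1/2)(n(7n−55) + 94), h₃ = C(n,6) − (1/2)(n³ − 13n² + 40n + 16), and hᵢ = C(n,2i) for 4 ≤ i ≤ ⌊n/2⌋. Then the sequence (h₀, h₁, …, h_{⌊n/2⌋}) is unimodal. (This is the h*-vector of the 3-stable second hypersimplex Δ_{n,2}^{stab(3)}.) -/
/-- The h*-vector of the 3-stable second hypersimplex `Δ_{n,2}^{stab(3)}`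
for odd `n`: `h₀ = 1`, `h₁ = C(n,2) − 3n`, `h₂ = C(n,4) − (n(7n−55)+94)/2`,
`h₃ = C(n,6) − (n³−13n²+40n+16)/2`, and `hᵢ = C(n,2i)` for `i ≥ 4`
(the divisions by 2 are exact for odd `n`). -/
def hThreeStable (n : ℕ) : ℕ → ℤ
  | 0 => 1
  | 1 => (n.choose 2 : ℤ) - 3 * n
  | 2 => (n.choose 4 : ℤ) - ((n : ℤ) * (7 * n - 55) + 94) / 2
  | 3 => (n.choose 6 : ℤ) - ((n : ℤ) ^ 3 - 13 * n ^ 2 + 40 * n + 16) / 2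
  | i => (n.choose (2 * i) : ℤ)

private lemma hts_ge4 (n i : ℕ) (h : 4 ≤ i) : hThreeStable n i = (n.choose (2*i) : ℤ) := by
  obtain ⟨a, rfl⟩ : ∃ a, i = a + 4 := ⟨i - 4, by omega⟩
  rfl

private lemma choose2' (n : ℕ) (h : 9 ≤ n) : (2:ℤ) * n.choose 2 = n*((n:ℤ)-1) := by
  have key : 2 * n.choose 2 = n.descFactorial 2 := by
    rw [Nat.descFactorial_eq_factorial_mul_choose]; norm_num [Nat.factorial]
  have hd : n.descFactorial 2 = n * (n-1) := by simp [Nat.descFactorial]; ring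
  have h1 : ((n-1:ℕ):ℤ) = n-1 := by omega
  have := congrArg (Nat.cast (R := ℤ)) (key.trans hd)
  push_cast [h1] at this
  linarith

private lemma choose4' (n : ℕ) (h : 9 ≤ n) :
    (24:ℤ) * n.choose 4 = n*((n:ℤ)-1)*((n:ℤ)-2)*((n:ℤ)-3) := by
  have key : 24 * n.choose 4 = n.descFactorial 4 := by
    rw [Nat.descFactorial_eq_factorial_mul_choose]; norm_num [Nat.factorial]
  have hd : n.descFactorial 4 = n * (n-1) * (n-2) * (n-3) := by simp [Nat.descFactorial]; ring
  have h1 : ((n-1:ℕ):ℤ) = n-1 := by omega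
  have h2 : ((n-2:ℕ):ℤ) = n-2 := by omega
  have h3 : ((n-3:ℕ):ℤ) = n-3 := by omega
  have := congrArg (Nat.cast (R := ℤ)) (key.trans hd)
  push_cast [h1,h2,h3] at this
  linarith

private lemma choose6' (n : ℕ) (h : 9 ≤ n) :
    (720:ℤ) * n.choose 6 = n*((n:ℤ)-1)*((n:ℤ)-2)*((n:ℤ)-3)*((n:ℤ)-4)*((n:ℤ)-5) := by
  have key : 720 * n.choose 6 = n.descFactorial 6 := by
    rw [Nat.descFactorial_eq_factorial_mul_choose]; norm_num [Nat.factorial]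
  have hd : n.descFactorial 6 = n * (n-1) * (n-2) * (n-3) * (n-4) * (n-5) := by
    simp [Nat.descFactorial]; ring
  have h1 : ((n-1:ℕ):ℤ) = n-1 := by omega
  have h2 : ((n-2:ℕ):ℤ) = n-2 := by omega
  have h3 : ((n-3:ℕ):ℤ) = n-3 := by omega
  have h4 : ((n-4:ℕ):ℤ) = n-4 := by omega
  have h5 : ((n-5:ℕ):ℤ) = n-5 := by omega
  have := congrArg (Nat.cast (R := ℤ)) (key.trans hd)
  push_cast [h1,h2,h3,h4,h5] at this
  linarith

private lemma chooseUp (m k : ℕ) (h : k + 2 ≤ m + 1) :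
    (2*m+1).choose k ≤ (2*m+1).choose (k+2) := by
  have hhalf : (2*m+1)/2 = m := by omega
  rcases Nat.lt_or_ge (k+2) (m+1) with hlt | hge
  · have s1 : (2*m+1).choose k ≤ (2*m+1).choose (k+1) :=
      Nat.choose_le_succ_of_lt_half_left (by omega)
    have s2 : (2*m+1).choose (k+1) ≤ (2*m+1).choose (k+2) :=
      Nat.choose_le_succ_of_lt_half_left (by omega)
    omega
  · have hk : k + 2 = m + 1 := by omega
    have hsymm : (2*m+1).choose (m+1) = (2*m+1).choose m := by
      rw [← Nat.choose_symm (by omega)]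
      congr 1; omega
    have s1 : (2*m+1).choose k ≤ (2*m+1).choose (k+1) :=
      Nat.choose_le_succ_of_lt_half_left (by omega)
    have hkm : k + 1 = m := by omega
    rw [hk, hsymm]
    exact le_of_le_of_eq s1 (by rw [hkm])

private lemma chooseDown (m k : ℕ) (hmk : m ≤ k) (hk2 : k + 2 ≤ 2*m+1) :
    (2*m+1).choose (k+2) ≤ (2*m+1).choose k := by
  have e1 : (2*m+1).choose (k+2) = (2*m+1).choose (2*m+1-(k+2)) := (Nat.choose_symm (by omega)).symm
  have e2 : (2*m+1).choose k = (2*m+1).choose (2*m+1-k) := (Nat.choose_symm (by omega)).symm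
  have e3 : 2*m+1-k = (2*m+1-(k+2)) + 2 := by omega
  rw [e1, e2, e3]
  exact chooseUp m _ (by omega)

/-- For odd `n ≥ 9`, the h*-vector `(h₀, h₁, …, h_{⌊n/2⌋})` of `Δ_{n,2}^{stab(3)}`
is unimodal. -/
theorem hThreeStable_unimodal (n : ℕ) (hodd : Odd n) (hn : 9 ≤ n) :
    ∃ j ≤ n / 2,
      (∀ i, 1 ≤ i → i ≤ j → hThreeStable n (i - 1) ≤ hThreeStable n i) ∧
      (∀ i, j ≤ i → i + 1 ≤ n / 2 → hThreeStable n (i + 1) ≤ hThreeStable n i) := by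
  obtain ⟨k, hk⟩ := hodd
  -- exact division facts
  have hc2 : (2:ℤ) * (((n : ℤ) * (7 * n - 55) + 94) / 2) = (n : ℤ) * (7 * n - 55) + 94 := by
    have hd : (2:ℤ) ∣ ((n : ℤ) * (7 * n - 55) + 94) :=
      ⟨14*(k:ℤ)^2 - 41*k + 23, by subst hk; push_cast; ring⟩
    rw [Int.mul_ediv_cancel' hd]
  have hc3 : (2:ℤ) * (((n : ℤ)^3 - 13*n^2 + 40*n + 16) / 2)
      = (n : ℤ)^3 - 13*n^2 + 40*n + 16 := by
    have hd : (2:ℤ) ∣ ((n : ℤ)^3 - 13*n^2 + 40*n + 16) :=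
      ⟨4*(k:ℤ)^3 - 20*k^2 + 17*k + 22, by subst hk; push_cast; ring⟩
    rw [Int.mul_ediv_cancel' hd]
  have hx : (9:ℤ) ≤ (n:ℤ) := by exact_mod_cast hn
  -- the three low-index inequalities, valid for all odd n ≥ 9
  have e2 := choose2' n hn
  have e4 := choose4' n hn
  have e6 := choose6' n hn
  have ineq01 : hThreeStable n 0 ≤ hThreeStable n 1 := by
    show (1:ℤ) ≤ (n.choose 2 : ℤ) - 3 * n
    nlinarith [e2]
  have ineq12 : hThreeStable n 1 ≤ hThreeStable n 2 := by
    show (n.choose 2 : ℤ) - 3 * n ≤ (n.choose 4 : ℤ) - ((n : ℤ) * (7 * n - 55) + 94) / 2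
    nlinarith [e2, e4, hc2, pow_nonneg (by linarith : (0:ℤ) ≤ (n:ℤ) - 9) 2,
      pow_nonneg (by linarith : (0:ℤ) ≤ (n:ℤ) - 9) 3,
      pow_nonneg (by linarith : (0:ℤ) ≤ (n:ℤ) - 9) 4]
  have ineq23 : hThreeStable n 2 ≤ hThreeStable n 3 := by
    show (n.choose 4 : ℤ) - ((n : ℤ) * (7 * n - 55) + 94) / 2
        ≤ (n.choose 6 : ℤ) - ((n : ℤ) ^ 3 - 13 * n ^ 2 + 40 * n + 16) / 2
    nlinarith [e4, e6, hc2, hc3, pow_nonneg (by linarith : (0:ℤ) ≤ (n:ℤ) - 9) 2,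
      pow_nonneg (by linarith : (0:ℤ) ≤ (n:ℤ) - 9) 3,
      pow_nonneg (by linarith : (0:ℤ) ≤ (n:ℤ) - 9) 4,
      pow_nonneg (by linarith : (0:ℤ) ≤ (n:ℤ) - 9) 5,
      pow_nonneg (by linarith : (0:ℤ) ≤ (n:ℤ) - 9) 6]
  set m := n / 2 with hm
  have hnm : n = 2 * m + 1 := by omega
  rcases Nat.lt_or_ge n 15 with hsmall | hbig
  · -- n ∈ {9, 11, 13}; use j = 3
    refine ⟨3, by omega, ?_, ?_⟩
    · intro i h1 h3
      interval_cases i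
      · exact ineq01
      · exact ineq12
      · exact ineq23
    · intro i h3 hit
      have him : i ≤ 5 := by omega
      interval_cases n <;> interval_cases i <;> first
        | exact absurd hit (by omega)
        | decide
  · -- n ≥ 15; use j = (m+1)/2 ≥ 4
    have hm7 : 7 ≤ m := by omega
    refine ⟨(m+1)/2, by omega, ?_, ?_⟩
    · intro i h1 hij
      have hj4 : 4 ≤ (m+1)/2 := by omega
      match i, h1 with
      | 1, _ => exact ineq01
      | 2, _ => exact ineq12
      | 3, _ => exact ineq23
      | 4, _ =>
        -- h₃ ≤ h₄ : correction is nonnegative and C(n,6) ≤ C(n,8)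
        show (n.choose 6 : ℤ) - ((n : ℤ) ^ 3 - 13 * n ^ 2 + 40 * n + 16) / 2
            ≤ hThreeStable n 4
        rw [hts_ge4 n 4 le_rfl]
        have hb : n.choose 6 ≤ n.choose 8 := by
          have := chooseUp m 6 (by omega)
          rwa [← hnm] at this
        have hb' : (n.choose 6 : ℤ) ≤ (n.choose (2*4) : ℤ) := by exact_mod_cast hb
        nlinarith [hc3, hb']
      | (a+5), _ =>
        rw [hts_ge4 n (a+5) (by omega), show a+5-1 = a+4 by omega, hts_ge4 n (a+4) (by omega),
          show 2*(a+5) = 2*(a+4)+2 by ring]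
        have hi2 : 2*(a+5) ≤ m + 1 := by omega
        have := chooseUp m (2*(a+4)) (by omega)
        rw [← hnm] at this
        exact_mod_cast this
    · intro i hji him
      have hi4 : 4 ≤ i := by omega
      rw [hts_ge4 n i hi4, hts_ge4 n (i+1) (by omega)]
      have hmi : m ≤ 2*i := by omega
      rw [show 2*(i+1) = 2*i+2 by ring]
      have := chooseDown m (2*i) hmi (by omega)
      rw [← hnm] at this
      exact_mod_cast this
end

section
/- Fix r ≥ 1 and odd n = 2r + 3. The number of lattice paths from (0,0) to (n−r, r) using unit North and East steps, staying weakly between the lines y = x and y = x − 3, that start with an East step, equals the number of maximal simplices of the circuit triangulation of Δ_{n,2} whose vertices are all r-stable and whose maximal r-adjacent vertex is ε_{{n, r}}; in particular this number equals the number of compositions (λ₁,…,λ_{n−r−1}) of r into nonnegative parts with i − 2 ≤ Σ_{j=1}^{i} λⱼ ≤ i for all i, where the path takes λᵢ North steps between the i-th and (i+1)-st East steps. -/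
/-- A vertex of `G_{n,2}` is `r`-stable if its two `1`s have circular distance at
least `r`. -/
def RStableVert (n r : ℕ) (ε : ZMod n → Bool) : Prop :=
  ∀ a b : ZMod n, ε a = true → ε b = true → a ≠ b →
    r ≤ min (a - b).val (b - a).val

/-- The number of East steps among the first `t` steps of the path `p`
(`true` = East, `false` = North). -/
def eastCount {n : ℕ} (p : Fin n → Bool) (t : ℕ) : ℕ :=
  (Finset.univ.filter (fun i : Fin n => i.val < t ∧ p i = true)).card

set_option maxHeartbeats 1000000

namespace PCC

theorem eastCount_zero {n : ℕ} (p : Fin n → Bool) : eastCount p 0 = 0 := by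
  simp [eastCount]

theorem eastCount_succ {n : ℕ} (p : Fin n → Bool) {t : ℕ} (ht : t < n) :
    eastCount p (t+1) = eastCount p t + (if p ⟨t, ht⟩ = true then 1 else 0) := by
  classical
  unfold eastCount
  by_cases h : p ⟨t, ht⟩ = true
  · rw [if_pos h]
    have hins : Finset.univ.filter (fun i : Fin n => i.val < t+1 ∧ p i = true)
        = insert ⟨t, ht⟩ (Finset.univ.filter (fun i : Fin n => i.val < t ∧ p i = true)) := by
      ext j
      simp only [Finset.mem_filter, Finset.mem_insert, Finset.mem_univ, true_and]
      constructor
      · rintro ⟨hlt, hp⟩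
        rcases Nat.lt_succ_iff_lt_or_eq.mp hlt with h' | h'
        · exact Or.inr ⟨h', hp⟩
        · exact Or.inl (Fin.ext h')
      · rintro (rfl | ⟨hlt, hp⟩)
        · exact ⟨Nat.lt_succ_self t, h⟩
        · exact ⟨Nat.lt_succ_of_lt hlt, hp⟩
    rw [hins, Finset.card_insert_of_notMem (by simp)]
  · rw [if_neg h]
    have hins : Finset.univ.filter (fun i : Fin n => i.val < t+1 ∧ p i = true)
        = Finset.univ.filter (fun i : Fin n => i.val < t ∧ p i = true) := by
      ext j
      simp only [Finset.mem_filter, Finset.mem_univ, true_and]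
      constructor
      · rintro ⟨hlt, hp⟩
        rcases Nat.lt_succ_iff_lt_or_eq.mp hlt with h' | h'
        · exact ⟨h', hp⟩
        · exact absurd (h' ▸ hp : p ⟨t, ht⟩ = true) h
      · rintro ⟨hlt, hp⟩
        exact ⟨Nat.lt_succ_of_lt hlt, hp⟩
    rw [hins]; omega

theorem eastCount_stable {n : ℕ} (p : Fin n → Bool) {t : ℕ} (ht : n ≤ t) :
    eastCount p t = eastCount p n := by
  unfold eastCount
  congr 1
  ext j
  simp only [Finset.mem_filter, Finset.mem_univ, true_and]
  have := j.isLt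
  constructor
  · rintro ⟨_, hp⟩; exact ⟨j.isLt, hp⟩
  · rintro ⟨_, hp⟩; exact ⟨lt_of_lt_of_le j.isLt ht, hp⟩

theorem eastCount_le {n : ℕ} (p : Fin n → Bool) (t : ℕ) : eastCount p t ≤ t := by
  induction t with
  | zero => simp [eastCount_zero]
  | succ t ih =>
    by_cases ht : t < n
    · rw [eastCount_succ p ht]
      split <;> omega
    · rw [eastCount_stable p (by omega)]
      have h1 : eastCount p n ≤ n := by
        have := Finset.card_filter_le (Finset.univ : Finset (Fin n)) (fun i => i.val < n ∧ p i = true)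
        simpa [eastCount, Finset.card_univ] using this
      omega

theorem eastCount_mono {n : ℕ} (p : Fin n → Bool) {s t : ℕ} (h : s ≤ t) :
    eastCount p s ≤ eastCount p t := by
  apply Finset.card_le_card
  intro j
  simp only [Finset.mem_filter, Finset.mem_univ, true_and]
  rintro ⟨hlt, hp⟩
  exact ⟨lt_of_lt_of_le hlt h, hp⟩

theorem countLt {n : ℕ} {T : ℕ} (hT : T ≤ n) :
    (Finset.univ.filter (fun j : Fin n => j.val < T)).card = T := by
  induction T with
  | zero => simp
  | succ T ih =>
    have hT' : T < n := hT
    have hins : Finset.univ.filter (fun j : Fin n => j.val < T+1)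
        = insert ⟨T, hT'⟩ (Finset.univ.filter (fun j : Fin n => j.val < T)) := by
      ext j
      simp only [Finset.mem_filter, Finset.mem_insert, Finset.mem_univ, true_and]
      constructor
      · intro hlt
        rcases Nat.lt_succ_iff_lt_or_eq.mp hlt with h' | h'
        · exact Or.inr h'
        · exact Or.inl (Fin.ext h')
      · rintro (rfl | hlt)
        · exact Nat.lt_succ_self T
        · exact Nat.lt_succ_of_lt hlt
    rw [hins, Finset.card_insert_of_notMem (by simp), ih (by omega)]

theorem countFalse {n : ℕ} (p : Fin n → Bool) {T : ℕ} (hT : T ≤ n) :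
    (Finset.univ.filter (fun j : Fin n => j.val < T ∧ p j = false)).card
      = T - eastCount p T := by
  classical
  have hsplit := Finset.card_filter_add_card_filter_not
    (s := Finset.univ.filter (fun j : Fin n => j.val < T)) (p := fun j => p j = true)
  rw [Finset.filter_filter, Finset.filter_filter] at hsplit
  have h1 : (Finset.univ.filter fun j : Fin n => j.val < T ∧ p j = true).card = eastCount p T := rfl
  have h2 : (Finset.univ.filter fun a : Fin n => a.val < T ∧ ¬ (p a = true))
      = (Finset.univ.filter fun j : Fin n => j.val < T ∧ p j = false) := by
    apply Finset.filter_congr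
    intro j _
    simp
  rw [countLt hT] at hsplit
  rw [h2] at hsplit
  omega


theorem natCast_inj {n a b : ℕ} (ha : a < n) (hb : b < n) :
    ((a : ZMod n) = (b : ZMod n)) ↔ a = b := by
  constructor
  · intro h
    have : NeZero n := ⟨by omega⟩
    have := congrArg ZMod.val h
    rwa [ZMod.val_cast_of_lt ha, ZMod.val_cast_of_lt hb] at this
  · rintro rfl; rfl

theorem val_sub_of_le {n a b : ℕ} (hab : a ≤ b) (hb : b < n) :
    ((b : ZMod n) - (a : ZMod n)).val = b - a := by
  have : NeZero n := ⟨by omega⟩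
  rw [← Nat.cast_sub hab, ZMod.val_cast_of_lt (by omega)]

theorem val_sub_of_lt {n a b : ℕ} (hab : a < b) (hb : b < n) :
    ((a : ZMod n) - (b : ZMod n)).val = n + a - b := by
  have : NeZero n := ⟨by omega⟩
  have h0 : (a : ZMod n) - b = ((n + a - b : ℕ) : ZMod n) := by
    rw [Nat.cast_sub (by omega), Nat.cast_add, ZMod.natCast_self, zero_add]
  rw [h0, ZMod.val_cast_of_lt (by omega)]


theorem chiPair_comm (n : ℕ) (a b : ZMod n) : chiPair n a b = chiPair n b a := by
  funext i; simp [chiPair, or_comm]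

theorem chiPair_apply_left (n : ℕ) (a b : ZMod n) : chiPair n a b a = true := by
  simp [chiPair]

theorem chiPair_apply_right (n : ℕ) (a b : ZMod n) : chiPair n a b b = true := by
  simp [chiPair]

theorem chiPair_eq_true {n : ℕ} {a b i : ZMod n} (h : chiPair n a b i = true) :
    i = a ∨ i = b := by
  simpa [chiPair] using h

theorem chiPair_eq_false {n : ℕ} {a b i : ZMod n} (h : chiPair n a b i = false) :
    i ≠ a ∧ i ≠ b := by
  simpa [chiPair, not_or] using h

theorem update_chiPair {n : ℕ} (a b : ZMod n) (hab : a ≠ b) (h1a : a + 1 ≠ a) (h1b : a + 1 ≠ b) :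
    Function.update (Function.update (chiPair n a b) a false) (a+1) true
      = chiPair n (a+1) b := by
  funext i
  by_cases hi1 : i = a + 1
  · subst hi1
    simp [Function.update, chiPair]
  · by_cases hia : i = a
    · subst hia
      rw [Function.update_of_ne (fun h => h1a h.symm), Function.update_self]
      simp only [chiPair, decide_eq_false_iff_not, not_or, eq_comm (a := false)]
      constructor
      · intro h; exact h1a h.symm
      · exact hab
    · rw [Function.update_of_ne hi1, Function.update_of_ne hia]
      simp [chiPair, hi1, hia]

theorem rstable_chiPair {n r : ℕ} {a b : ZMod n} (h : r ≤ min (a - b).val (b - a).val) :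
    RStableVert n r (chiPair n a b) := by
  intro x y hx hy hxy
  rcases chiPair_eq_true hx with rfl | rfl <;> rcases chiPair_eq_true hy with rfl | rfl
  · exact absurd rfl hxy
  · exact h
  · exact le_min (le_trans h (min_le_right _ _)) (le_trans h (min_le_left _ _))
  · exact absurd rfl hxy

theorem rstable_chiPair_elim {n r : ℕ} {a b : ZMod n} (hab : a ≠ b)
    (h : RStableVert n r (chiPair n a b)) : r ≤ min (a - b).val (b - a).val :=
  h a b (chiPair_apply_left n a b) (chiPair_apply_right n a b) hab


theorem add_one_ne {n : ℕ} (hn : 2 ≤ n) (x : ZMod n) : x + 1 ≠ x := by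
  have : Fact (1 < n) := ⟨by omega⟩
  intro h
  rw [add_eq_left] at h
  exact one_ne_zero h

def PathP (r : ℕ) (p : Fin (2*r+3) → Bool) : Prop :=
  p ⟨0, by omega⟩ = true ∧ eastCount p (2*r+3) = (2*r+3) - r ∧
  ∀ t ≤ 2*r+3, t - eastCount p t ≤ eastCount p t ∧ eastCount p t ≤ (t - eastCount p t) + 3

def pc (r : ℕ) (p : Fin (2*r+3) → Bool) : Fin (2*r+3+1) → ZMod (2*r+3) → Bool :=
  fun t => chiPair (2*r+3) ((t.val - eastCount p t.val : ℕ) : ZMod (2*r+3))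
    (((r + eastCount p t.val : ℕ) : ZMod (2*r+3)))

theorem path_bounds {r : ℕ} {p : Fin (2*r+3) → Bool} (hp : PathP r p) {t : ℕ} (ht : t ≤ 2*r+3) :
    eastCount p t ≤ t ∧ t ≤ 2 * eastCount p t ∧ 2 * eastCount p t ≤ t + 3 := by
  obtain ⟨h1, h2⟩ := hp.2.2 t ht
  have h3 := eastCount_le p t
  omega

theorem pc_edge {r : ℕ} (hr : 1 ≤ r) {p : Fin (2*r+3) → Bool} (hp : PathP r p)
    (i : Fin (2*r+3)) : EdgeStep (2*r+3) (pc r p i.castSucc) (pc r p i.succ) := by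
  obtain ⟨e0, e1, e2⟩ := path_bounds hp (show i.val ≤ 2*r+3 by omega)
  obtain ⟨f0, f1, f2⟩ := path_bounds hp (show i.val + 1 ≤ 2*r+3 from i.isLt)
  have hsucc := eastCount_succ p i.isLt
  set t := i.val with hts
  set e := eastCount p t with hes
  have hpc1 : pc r p i.castSucc
      = chiPair (2*r+3) ((t - e : ℕ) : ZMod (2*r+3)) ((r + e : ℕ) : ZMod (2*r+3)) := rfl
  have htn : t < 2*r+3 := i.isLt
  by_cases hpt : p ⟨t, i.isLt⟩ = true
  · -- East step
    have he1 : eastCount p (t+1) = e + 1 := by rw [hsucc, if_pos hpt]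
    rw [he1] at f0 f1 f2
    have hβlt : r + e < 2*r+3 := by omega
    have hc1 : ((r+e : ℕ) : ZMod (2*r+3)) + 1 = ((r+e+1 : ℕ) : ZMod (2*r+3)) := by
      push_cast; ring
    have hne1 : ((r+e+1 : ℕ) : ZMod (2*r+3)) ≠ ((t - e : ℕ) : ZMod (2*r+3)) := by
      rcases Nat.lt_or_ge (r+e+1) (2*r+3) with h | h
      · rw [Ne, natCast_inj h (by omega)]; omega
      · have heq : r+e+1 = 2*r+3 := by omega
        rw [heq, ZMod.natCast_self]
        intro h0
        have h0' : ((0:ℕ) : ZMod (2*r+3)) = ((t - e : ℕ) : ZMod (2*r+3)) := by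
          simpa using h0
        have := (natCast_inj (show (0:ℕ) < 2*r+3 by omega) (show t - e < 2*r+3 by omega)).mp h0'
        omega
    have hne2 : ((r+e+1 : ℕ) : ZMod (2*r+3)) ≠ ((r+e : ℕ) : ZMod (2*r+3)) := by
      rcases Nat.lt_or_ge (r+e+1) (2*r+3) with h | h
      · rw [Ne, natCast_inj h (by omega)]; omega
      · have hrq : r+e+1 = 2*r+3 := by omega
        rw [hrq, ZMod.natCast_self]
        intro h0
        have h0' : ((0:ℕ) : ZMod (2*r+3)) = ((r+e : ℕ) : ZMod (2*r+3)) := by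
          simpa using h0
        have := (natCast_inj (show (0:ℕ) < 2*r+3 by omega) hβlt).mp h0'
        omega
    have hab : ((r+e : ℕ) : ZMod (2*r+3)) ≠ ((t - e : ℕ) : ZMod (2*r+3)) := by
      rw [Ne, natCast_inj hβlt (by omega)]; omega
    have hpc2 : pc r p i.succ
        = chiPair (2*r+3) ((t - e : ℕ) : ZMod (2*r+3)) ((r+e+1 : ℕ) : ZMod (2*r+3)) := by
      unfold pc
      rw [show (i.succ).val = t+1 from rfl, he1,
        show t + 1 - (e + 1) = t - e from by omega,
        show r + (e + 1) = r + e + 1 from by omega]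
    refine ⟨((r+e : ℕ) : ZMod (2*r+3)), ?_, ?_, ?_⟩
    · rw [hpc1]; exact chiPair_apply_right _ _ _
    · rw [hpc1, hc1]
      simp only [chiPair, decide_eq_false_iff_not, not_or]
      exact ⟨hne1, hne2⟩
    · rw [hpc2, hpc1,
        chiPair_comm (2*r+3) ((t - e : ℕ) : ZMod (2*r+3)) ((r+e : ℕ) : ZMod (2*r+3)),
        update_chiPair _ _ hab (by rw [hc1]; exact hne2) (by rw [hc1]; exact hne1),
        hc1, chiPair_comm]
  · -- North step
    have hpt' : p ⟨t, i.isLt⟩ = false := by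
      cases h : p ⟨t, i.isLt⟩
      · rfl
      · exact absurd h hpt
    have he1 : eastCount p (t+1) = e := by rw [hsucc, if_neg hpt]; omega
    rw [he1] at f0 f1 f2
    have hβlt : r + e < 2*r+3 := by omega
    have hαlt : t - e + 1 < 2*r+3 := by omega
    have hc1 : ((t - e : ℕ) : ZMod (2*r+3)) + 1 = ((t - e + 1 : ℕ) : ZMod (2*r+3)) := by
      push_cast; ring
    have hne1 : ((t - e + 1 : ℕ) : ZMod (2*r+3)) ≠ ((t - e : ℕ) : ZMod (2*r+3)) := by
      rw [Ne, natCast_inj hαlt (by omega)]; omega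
    have hne2 : ((t - e + 1 : ℕ) : ZMod (2*r+3)) ≠ ((r+e : ℕ) : ZMod (2*r+3)) := by
      rw [Ne, natCast_inj hαlt hβlt]; omega
    have hab : ((t - e : ℕ) : ZMod (2*r+3)) ≠ ((r+e : ℕ) : ZMod (2*r+3)) := by
      rw [Ne, natCast_inj (by omega) hβlt]; omega
    have hpc2 : pc r p i.succ
        = chiPair (2*r+3) ((t - e + 1 : ℕ) : ZMod (2*r+3)) ((r+e : ℕ) : ZMod (2*r+3)) := by
      unfold pc
      rw [show (i.succ).val = t+1 from rfl, he1,
        show t + 1 - e = t - e + 1 from by omega]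
    refine ⟨((t - e : ℕ) : ZMod (2*r+3)), ?_, ?_, ?_⟩
    · rw [hpc1]; exact chiPair_apply_left _ _ _
    · rw [hpc1, hc1]
      simp only [chiPair, decide_eq_false_iff_not, not_or]
      exact ⟨hne1, hne2⟩
    · rw [hpc2, hpc1,
        update_chiPair _ _ hab (by rw [hc1]; exact hne1) (by rw [hc1]; exact hne2),
        hc1]


theorem pc_zero {r : ℕ} (p : Fin (2*r+3) → Bool) :
    pc r p 0 = chiPair (2*r+3) ((2*r+3 : ℕ) : ZMod (2*r+3))
      ((((2*r+3 : ℕ) : ZMod (2*r+3))) + r) := by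
  unfold pc
  rw [show ((0 : Fin (2*r+3+1))).val = 0 from rfl, eastCount_zero]
  simp [ZMod.natCast_self]

theorem pc_last {r : ℕ} {p : Fin (2*r+3) → Bool} (hp : PathP r p) :
    pc r p (Fin.last (2*r+3)) = pc r p 0 := by
  unfold pc
  rw [show (Fin.last (2*r+3)).val = 2*r+3 from rfl,
    show ((0 : Fin (2*r+3+1))).val = 0 from rfl, eastCount_zero, hp.2.1,
    show 2*r+3 - (2*r+3 - r) = r from by omega,
    show r + (2*r+3 - r) = 2*r+3 from by omega,
    show (0:ℕ) - 0 = 0 from rfl, show r + 0 = r from rfl,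
    ZMod.natCast_self, Nat.cast_zero]
  exact chiPair_comm _ _ _

theorem pc_rstable {r : ℕ} (hr : 1 ≤ r) {p : Fin (2*r+3) → Bool} (hp : PathP r p)
    (t : Fin (2*r+3+1)) : RStableVert (2*r+3) r (pc r p t) := by
  have htn : t.val ≤ 2*r+3 := by omega
  obtain ⟨e0, e1, e2⟩ := path_bounds hp htn
  rcases Nat.lt_or_ge t.val (2*r+3) with hlt | hge
  · set tv := t.val
    set e := eastCount p tv with he
    have hβ : r + e < 2*r+3 := by omega
    have hαβ : tv - e < r + e := by omega
    have hpct : pc r p t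
        = chiPair (2*r+3) ((tv - e : ℕ) : ZMod (2*r+3)) ((r + e : ℕ) : ZMod (2*r+3)) := rfl
    rw [hpct]
    apply rstable_chiPair
    rw [val_sub_of_lt hαβ hβ, val_sub_of_le (le_of_lt hαβ) hβ]
    refine le_min (by omega) (by omega)
  · have htv : t.val = 2*r+3 := by omega
    have hpct : pc r p t
        = chiPair (2*r+3) ((t.val - eastCount p t.val : ℕ) : ZMod (2*r+3))
          ((r + eastCount p t.val : ℕ) : ZMod (2*r+3)) := rfl
    rw [hpct, htv, hp.2.1,
      show 2*r+3 - (2*r+3 - r) = r from by omega,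
      show r + (2*r+3 - r) = 2*r+3 from by omega]
    apply rstable_chiPair
    rw [show ((2*r+3 : ℕ) : ZMod (2*r+3)) = ((0:ℕ) : ZMod (2*r+3)) from by
      simp [ZMod.natCast_self]]
    rw [val_sub_of_le (by omega) (by omega), val_sub_of_lt (by omega) (by omega)]
    refine le_min (by omega) (by omega)

theorem mixed_contra {r : ℕ} (hr : 1 ≤ r) {t e : ℕ} (htn : t < 2*r+3) (h1 : e ≤ t)
    (hA : t + 1 ≤ 2*e) (hB : 2*(e+1) ≤ t + 4)
    (heq : chiPair (2*r+3) ((t+1-e : ℕ) : ZMod (2*r+3)) ((r+e : ℕ) : ZMod (2*r+3))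
         = chiPair (2*r+3) ((t-e : ℕ) : ZMod (2*r+3)) ((r+e+1 : ℕ) : ZMod (2*r+3))) :
    False := by
  have hβ : r + e < 2*r+3 := by omega
  have hc := congrFun heq ((r+e : ℕ) : ZMod (2*r+3))
  rw [chiPair_apply_right] at hc
  rcases chiPair_eq_true hc.symm with h | h
  · have := (natCast_inj hβ (by omega)).mp h
    omega
  · rcases Nat.lt_or_ge (r+e+1) (2*r+3) with hlt | hge
    · have := (natCast_inj hβ hlt).mp h
      omega
    · have hrq : r+e+1 = 2*r+3 := by omega
      rw [hrq, ZMod.natCast_self] at h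
      have h' : ((r+e:ℕ) : ZMod (2*r+3)) = ((0:ℕ) : ZMod (2*r+3)) := by simpa using h
      have := (natCast_inj hβ (by omega)).mp h'
      omega

theorem pc_inj {r : ℕ} (hr : 1 ≤ r) {p p' : Fin (2*r+3) → Bool}
    (hp : PathP r p) (hp' : PathP r p') (h : pc r p = pc r p') : p = p' := by
  have key : ∀ t, t ≤ 2*r+3 → eastCount p t = eastCount p' t := by
    intro t
    induction t with
    | zero => intro _; rw [eastCount_zero, eastCount_zero]
    | succ t ih =>
      intro ht
      have htn : t < 2*r+3 := ht
      have ihe := ih (by omega)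
      have s1 := eastCount_succ p htn
      have s2 := eastCount_succ p' htn
      have hcc := congrFun h ⟨t+1, by omega⟩
      have hcc' : chiPair (2*r+3) ((t+1 - eastCount p (t+1) : ℕ) : ZMod (2*r+3))
            ((r + eastCount p (t+1) : ℕ) : ZMod (2*r+3))
          = chiPair (2*r+3) ((t+1 - eastCount p' (t+1) : ℕ) : ZMod (2*r+3))
            ((r + eastCount p' (t+1) : ℕ) : ZMod (2*r+3)) := hcc
      obtain ⟨a0, a1, a2⟩ := path_bounds hp (show t+1 ≤ 2*r+3 from ht)
      obtain ⟨b0, b1, b2⟩ := path_bounds hp' (show t+1 ≤ 2*r+3 from ht)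
      obtain ⟨c0, c1, c2⟩ := path_bounds hp (show t ≤ 2*r+3 by omega)
      cases hb : p ⟨t, htn⟩ <;> cases hb' : p' ⟨t, htn⟩ <;>
        rw [hb] at s1 <;> rw [hb'] at s2 <;> simp at s1 s2
      · omega
      · -- p north, p' east
        exfalso
        rw [s1, s2, ← ihe] at hcc'
        rw [show t + 1 - (eastCount p t + 1) = t - eastCount p t from by omega,
            show r + (eastCount p t + 1) = r + eastCount p t + 1 from by omega] at hcc'
        rw [s1] at a1
        rw [s2, ← ihe] at b2
        exact mixed_contra hr htn c0 (by omega) (by omega) hcc'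
      · -- p east, p' north
        exfalso
        rw [s1, s2, ← ihe] at hcc'
        rw [show t + 1 - (eastCount p t + 1) = t - eastCount p t from by omega,
            show r + (eastCount p t + 1) = r + eastCount p t + 1 from by omega] at hcc'
        rw [s1] at a2
        rw [s2, ← ihe] at b1
        exact mixed_contra hr htn c0 (by omega) (by omega) hcc'.symm
      · omega
  funext j
  have s1 := eastCount_succ p j.isLt
  have s2 := eastCount_succ p' j.isLt
  simp only [Fin.eta] at s1 s2
  have k1 := key j.val (by omega)
  have k2 := key (j.val+1) (by omega)
  cases hb : p j <;> cases hb' : p' j <;> rw [hb] at s1 <;> rw [hb'] at s2 <;>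
    simp at s1 s2 <;> first | rfl | (exfalso; omega)


def CircP (r : ℕ) (c : Fin (2*r+3+1) → ZMod (2*r+3) → Bool) : Prop :=
  c 0 = chiPair (2*r+3) ((2*r+3 : ℕ) : ZMod (2*r+3))
      ((((2*r+3 : ℕ) : ZMod (2*r+3))) + r) ∧
  c (Fin.last (2*r+3)) = c 0 ∧
  (∀ i : Fin (2*r+3), EdgeStep (2*r+3) (c i.castSucc) (c i.succ)) ∧
  (∀ i, RStableVert (2*r+3) r (c i)) ∧
  (∀ ℓ' ∈ Finset.Icc 1 (2*r+3),
    (∃ i, c i = chiPair (2*r+3) (ℓ' : ZMod (2*r+3)) ((ℓ' : ZMod (2*r+3)) + r)) →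
      ℓ' ≤ 2*r+3)

def eCf (r : ℕ) (c : Fin (2*r+3+1) → ZMod (2*r+3) → Bool) : ℕ → ℕ
  | 0 => 0
  | t+1 => eCf r c t + (if h : t+1 ≤ 2*r+3 then
      (if c ⟨t+1, by omega⟩ ((r + eCf r c t + 1 : ℕ) : ZMod (2*r+3)) = true
        then 1 else 0) else 0)

theorem eCf_zero (r : ℕ) (c : Fin (2*r+3+1) → ZMod (2*r+3) → Bool) : eCf r c 0 = 0 := rfl

theorem eCf_succ (r : ℕ) (c : Fin (2*r+3+1) → ZMod (2*r+3) → Bool) (t : ℕ)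
    (ht : t + 1 ≤ 2*r+3) :
    eCf r c (t+1) = eCf r c t + (if c ⟨t+1, by omega⟩
      ((r + eCf r c t + 1 : ℕ) : ZMod (2*r+3)) = true then 1 else 0) := by
  show eCf r c t + _ = _
  rw [dif_pos ht]

attribute [irreducible] eCf

theorem eCf_inv {r : ℕ} (hr : 1 ≤ r) {c : Fin (2*r+3+1) → ZMod (2*r+3) → Bool}
    (hc : CircP r c) :
    ∀ t, t ≤ 2*r+3 → eCf r c t ≤ t ∧ t ≤ 2 * eCf r c t ∧ 2 * eCf r c t ≤ t + 3 ∧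
      ∀ ht : t < 2*r+3+1,
        c ⟨t, ht⟩ = chiPair (2*r+3) ((t - eCf r c t : ℕ) : ZMod (2*r+3))
          ((r + eCf r c t : ℕ) : ZMod (2*r+3)) := by
  intro t
  induction t with
  | zero =>
    intro _
    refine ⟨by simp [eCf_zero], by simp [eCf_zero], by simp [eCf_zero], ?_⟩
    intro ht
    have h0 : (⟨0, ht⟩ : Fin (2*r+3+1)) = 0 := Fin.ext (by simp)
    rw [h0, hc.1]
    show chiPair _ _ _ = chiPair (2*r+3) ((0 - eCf r c 0 : ℕ) : ZMod (2*r+3))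
      ((r + eCf r c 0 : ℕ) : ZMod (2*r+3))
    simp [eCf_zero, ZMod.natCast_self]
  | succ t ih =>
    intro ht
    have htn : t < 2*r+3 := ht
    obtain ⟨i0, i1, i2, i3⟩ := ih (by omega)
    have hct := i3 (by omega)
    obtain ⟨e, he⟩ : ∃ e, e = eCf r c t := ⟨_, rfl⟩
    rw [← he] at i0 i1 i2 hct
    have hβn : r + e < 2*r+3 := by omega
    have hαβ : t - e < r + e := by omega
    have hαn : t - e < 2*r+3 := by omega
    have hab : ((t - e : ℕ) : ZMod (2*r+3)) ≠ ((r + e : ℕ) : ZMod (2*r+3)) := by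
      rw [Ne, natCast_inj hαn hβn]; omega
    obtain ⟨w, hw1, hw2, hw3⟩ := hc.2.2.1 ⟨t, htn⟩
    have hcs : (Fin.castSucc (⟨t, htn⟩ : Fin (2*r+3))) = (⟨t, by omega⟩ : Fin (2*r+3+1)) := rfl
    have hsc : (Fin.succ (⟨t, htn⟩ : Fin (2*r+3))) = (⟨t+1, by omega⟩ : Fin (2*r+3+1)) := rfl
    rw [hcs, hct] at hw1 hw2 hw3
    rw [hsc] at hw3
    have hrs := hc.2.2.2.1 (⟨t+1, by omega⟩ : Fin (2*r+3+1))
    rcases chiPair_eq_true hw1 with rfl | rfl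
    · -- w = cast (t - e) : North step
      obtain ⟨hn1, hn2⟩ := chiPair_eq_false hw2
      have hα1 : ((t - e : ℕ) : ZMod (2*r+3)) + 1 = ((t - e + 1 : ℕ) : ZMod (2*r+3)) := by
        push_cast; ring
      have hupd : c ⟨t+1, by omega⟩
          = chiPair (2*r+3) ((t - e + 1 : ℕ) : ZMod (2*r+3)) ((r + e : ℕ) : ZMod (2*r+3)) := by
        rw [hw3, update_chiPair _ _ hab hn1 hn2, hα1]
      have hα1n : t - e + 1 < 2*r+3 := by omega
      have hab2 : ((t - e + 1 : ℕ) : ZMod (2*r+3)) ≠ ((r + e : ℕ) : ZMod (2*r+3)) := by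
        rw [← hα1]; exact hn2
      have hα1β : t - e + 1 < r + e := by
        have := (natCast_inj hα1n hβn).not.mp hab2
        omega
      -- the test cell is empty
      have htest : c ⟨t+1, by omega⟩ ((r + e + 1 : ℕ) : ZMod (2*r+3)) = false := by
        rw [hupd]
        simp only [chiPair, decide_eq_false_iff_not, not_or]
        constructor
        · rcases Nat.lt_or_ge (r+e+1) (2*r+3) with hlt | hge
          · intro h0
            have := (natCast_inj hlt hα1n).mp h0
            omega
          · have hrq : r+e+1 = 2*r+3 := by omega
            rw [hrq, ZMod.natCast_self]
            intro h0
            have h0' : ((0:ℕ) : ZMod (2*r+3)) = ((t - e + 1 : ℕ) : ZMod (2*r+3)) := by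
              simpa using h0
            have := (natCast_inj (by omega) hα1n).mp h0'
            omega
        · rcases Nat.lt_or_ge (r+e+1) (2*r+3) with hlt | hge
          · intro h0
            have := (natCast_inj hlt hβn).mp h0
            omega
          · have hrq : r+e+1 = 2*r+3 := by omega
            rw [hrq, ZMod.natCast_self]
            intro h0
            have h0' : ((0:ℕ) : ZMod (2*r+3)) = ((r + e : ℕ) : ZMod (2*r+3)) := by
              simpa using h0
            have := (natCast_inj (by omega) hβn).mp h0'
            omega
      have hstep : eCf r c (t+1) = e + (if c ⟨t+1, by omega⟩
          ((r + e + 1 : ℕ) : ZMod (2*r+3)) = true then 1 else 0) := by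
        rw [he]; exact eCf_succ r c t (by omega)
      have heq : eCf r c (t+1) = e := by
        rw [hstep, htest]
        simp
      -- t+1 ≤ 2e from r-stability of the new vertex
      rw [hupd] at hrs
      have hmin := rstable_chiPair_elim hab2 hrs
      rw [val_sub_of_lt hα1β hβn, val_sub_of_le (le_of_lt hα1β) hβn] at hmin
      have hge2 : r ≤ r + e - (t - e + 1) := le_trans hmin (min_le_right _ _)
      refine ⟨by omega, by omega, by omega, ?_⟩
      intro ht'
      rw [heq, hupd, show t + 1 - e = t - e + 1 from by omega]
    · -- w = cast (r + e) : East step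
      obtain ⟨hn1, hn2⟩ := chiPair_eq_false hw2
      have hβ1 : ((r + e : ℕ) : ZMod (2*r+3)) + 1 = ((r + e + 1 : ℕ) : ZMod (2*r+3)) := by
        push_cast; ring
      have hupd : c ⟨t+1, by omega⟩
          = chiPair (2*r+3) ((t - e : ℕ) : ZMod (2*r+3)) ((r + e + 1 : ℕ) : ZMod (2*r+3)) := by
        rw [hw3, chiPair_comm (2*r+3) ((t - e : ℕ) : ZMod (2*r+3)) ((r + e : ℕ) : ZMod (2*r+3)),
          update_chiPair _ _ (Ne.symm hab) hn2 hn1, hβ1, chiPair_comm]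
      have hab2 : ((t - e : ℕ) : ZMod (2*r+3)) ≠ ((r + e + 1 : ℕ) : ZMod (2*r+3)) := by
        rw [← hβ1]; exact (Ne.symm hn1)
      have htest : c ⟨t+1, by omega⟩ ((r + e + 1 : ℕ) : ZMod (2*r+3)) = true := by
        rw [hupd]; exact chiPair_apply_right _ _ _
      have hstep : eCf r c (t+1) = e + (if c ⟨t+1, by omega⟩
          ((r + e + 1 : ℕ) : ZMod (2*r+3)) = true then 1 else 0) := by
        rw [he]; exact eCf_succ r c t (by omega)
      have heq : eCf r c (t+1) = e + 1 := by
        rw [hstep, htest]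
        simp
      rw [hupd] at hrs
      have hmin := rstable_chiPair_elim hab2 hrs
      have h2e : 2 * e ≤ t + 2 := by
        rcases Nat.lt_or_ge (r+e+1) (2*r+3) with hlt | hge
        · rw [val_sub_of_lt (by omega) hlt, val_sub_of_le (by omega) hlt] at hmin
          have := le_trans hmin (min_le_left _ _)
          omega
        · have hrq : r+e+1 = 2*r+3 := by omega
          rw [hrq, ZMod.natCast_self] at hmin hab2
          have hα0 : t - e ≠ 0 := by
            intro h0
            apply hab2
            rw [h0]; simp
          rw [show (0 : ZMod (2*r+3)) = ((0:ℕ) : ZMod (2*r+3)) from by simp] at hmin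
          rw [val_sub_of_le (by omega) hαn, val_sub_of_lt (by omega) hαn] at hmin
          have := le_trans hmin (min_le_left _ _)
          omega
      refine ⟨by omega, by omega, by omega, ?_⟩
      intro ht'
      rw [heq, hupd, show t + 1 - (e + 1) = t - e from by omega,
        show r + (e + 1) = r + e + 1 from by omega]


theorem eCf_final {r : ℕ} (hr : 1 ≤ r) {c : Fin (2*r+3+1) → ZMod (2*r+3) → Bool}
    (hc : CircP r c) : eCf r c (2*r+3) = r + 3 := by
  obtain ⟨i0, i1, i2, i3⟩ := eCf_inv hr hc (2*r+3) le_rfl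
  have hct := i3 (by omega)
  have hlast : (⟨2*r+3, by omega⟩ : Fin (2*r+3+1)) = Fin.last (2*r+3) := rfl
  rw [hlast, hc.2.1, hc.1] at hct
  by_contra hne
  have he2 : eCf r c (2*r+3) = r + 2 := by omega
  rw [he2, show 2*r+3 - (r+2) = r+1 from by omega] at hct
  have hv := congrFun hct (0 : ZMod (2*r+3))
  have hL : chiPair (2*r+3) ((2*r+3 : ℕ) : ZMod (2*r+3))
      (((2*r+3 : ℕ) : ZMod (2*r+3)) + r) 0 = true := by
    simp [chiPair, ZMod.natCast_self]
  rw [hL] at hv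
  rcases chiPair_eq_true hv.symm with h | h
  · have h' : ((0:ℕ) : ZMod (2*r+3)) = ((r+1 : ℕ) : ZMod (2*r+3)) := by simpa using h
    have := (natCast_inj (show (0:ℕ) < 2*r+3 by omega) (by omega)).mp h'
    omega
  · have h' : ((0:ℕ) : ZMod (2*r+3)) = ((r+(r+2) : ℕ) : ZMod (2*r+3)) := by simpa using h
    have := (natCast_inj (show (0:ℕ) < 2*r+3 by omega) (by omega)).mp h'
    omega

theorem pc_surj {r : ℕ} (hr : 1 ≤ r) {c : Fin (2*r+3+1) → ZMod (2*r+3) → Bool}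
    (hc : CircP r c) : ∃ p : Fin (2*r+3) → Bool, PathP r p ∧ pc r p = c := by
  classical
  set p : Fin (2*r+3) → Bool :=
    fun j => decide (eCf r c (j.val+1) = eCf r c j.val + 1) with hpdef
  have hec : ∀ t, t ≤ 2*r+3 → eastCount p t = eCf r c t := by
    intro t
    induction t with
    | zero => intro _; rw [eastCount_zero, eCf_zero]
    | succ t ih =>
      intro ht
      have htn : t < 2*r+3 := ht
      have ihe := ih (by omega)
      have s1 := eastCount_succ p htn
      have hdich : eCf r c (t+1) = eCf r c t ∨ eCf r c (t+1) = eCf r c t + 1 := by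
        rw [eCf_succ r c t (by omega)]
        by_cases hcc : c (⟨t+1, by omega⟩ : Fin (2*r+3+1))
            ((r + eCf r c t + 1 : ℕ) : ZMod (2*r+3)) = true
        · rw [if_pos hcc]; omega
        · rw [if_neg hcc]; omega
      have hpj : p ⟨t, htn⟩ = decide (eCf r c (t+1) = eCf r c t + 1) := rfl
      rcases hdich with hd | hd
      · have hfalse : p ⟨t, htn⟩ = false := by
          rw [hpj, hd]; simp
        rw [s1, hfalse, ihe, hd]; simp
      · have htrue : p ⟨t, htn⟩ = true := by
          rw [hpj, hd]; simp
        rw [s1, htrue, ihe, hd]; simp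
  have hPath : PathP r p := by
    refine ⟨?_, ?_, ?_⟩
    · obtain ⟨i0, i1, _, _⟩ := eCf_inv hr hc 1 (by omega)
      have h1 : eCf r c 1 = 1 := by omega
      show decide (eCf r c (0+1) = eCf r c 0 + 1) = true
      rw [eCf_zero]
      simp [h1]
    · rw [hec (2*r+3) le_rfl, eCf_final hr hc]
      omega
    · intro t ht
      obtain ⟨i0, i1, i2, _⟩ := eCf_inv hr hc t ht
      rw [hec t ht]
      omega
  refine ⟨p, hPath, ?_⟩
  funext j
  obtain ⟨_, _, _, i3⟩ := eCf_inv hr hc j.val (by omega)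
  have hct := i3 j.isLt
  have hj : (⟨j.val, j.isLt⟩ : Fin (2*r+3+1)) = j := rfl
  rw [hj] at hct
  have hpc : pc r p j = chiPair (2*r+3) ((j.val - eastCount p j.val : ℕ) : ZMod (2*r+3))
      ((r + eastCount p j.val : ℕ) : ZMod (2*r+3)) := rfl
  rw [hpc, hec j.val (by omega), hct]

theorem part1 (r : ℕ) (hr : 1 ≤ r) :
    Nat.card {p : Fin (2*r+3) → Bool // PathP r p}
      = Nat.card {c : Fin (2*r+3+1) → ZMod (2*r+3) → Bool // CircP r c} := by
  have hmem : ∀ x : {p : Fin (2*r+3) → Bool // PathP r p}, CircP r (pc r x.1) := by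
    rintro ⟨p, hp⟩
    exact ⟨pc_zero p, pc_last hp, pc_edge hr hp, pc_rstable hr hp,
      fun l hl _ => (Finset.mem_Icc.mp hl).2⟩
  apply Nat.card_eq_of_bijective (fun x => ⟨pc r x.1, hmem x⟩)
  constructor
  · intro x y hxy
    exact Subtype.ext (pc_inj hr x.2 y.2 (congrArg Subtype.val hxy))
  · rintro ⟨c, hcM⟩
    obtain ⟨p, hp, hpc⟩ := pc_surj hr hcM
    exact ⟨⟨p, hp⟩, Subtype.ext hpc⟩


def CompP (r : ℕ) (l : Fin ((2*r+3) - r - 1) → ℕ) : Prop :=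
  (∑ j, l j) = r ∧
  ∀ i : Fin ((2*r+3) - r - 1),
    (i : ℕ) ≤ (∑ j ∈ Finset.univ.filter (· ≤ i), l j) + 1 ∧
    (∑ j ∈ Finset.univ.filter (· ≤ i), l j) ≤ (i : ℕ) + 1

def compF {n : ℕ} (p : Fin n → Bool) (k : ℕ) : ℕ :=
  (Finset.univ.filter (fun j : Fin n => p j = false ∧ eastCount p (j.val+1) = k+1)).card

def compL (r : ℕ) (p : Fin (2*r+3) → Bool) : Fin ((2*r+3) - r - 1) → ℕ :=
  fun i => compF p i.val

def Scard {n : ℕ} (p : Fin n → Bool) (k : ℕ) : ℕ :=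
  (Finset.univ.filter (fun j : Fin n => p j = false ∧ eastCount p (j.val+1) ≤ k)).card

theorem exists_eq {n : ℕ} (p : Fin n → Bool) {k T : ℕ} (hk : k ≤ eastCount p T) :
    ∃ t, t ≤ T ∧ eastCount p t = k := by
  induction T with
  | zero =>
    refine ⟨0, le_rfl, ?_⟩
    rw [eastCount_zero] at hk ⊢
    omega
  | succ T ih =>
    by_cases hT : T < n
    · have hs := eastCount_succ p hT
      by_cases hk' : k ≤ eastCount p T
      · obtain ⟨t, ht1, ht2⟩ := ih hk'
        exact ⟨t, by omega, ht2⟩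
      · refine ⟨T+1, le_rfl, ?_⟩
        rw [hs] at hk ⊢
        split at hk <;> [skip; omega]
        split <;> omega
    · have h1 : eastCount p (T+1) = eastCount p n := eastCount_stable p (by omega)
      have h2 : eastCount p T = eastCount p n := eastCount_stable p (by omega)
      obtain ⟨t, ht1, ht2⟩ := ih (by omega)
      exact ⟨t, by omega, ht2⟩

theorem hit {r : ℕ} {p : Fin (2*r+3) → Bool} (hp : PathP r p) {k : ℕ} (hk : k ≤ r+3) :
    ∃ T, T ≤ 2*r+3 ∧ eastCount p T = k ∧ ∀ t < T, eastCount p t < k := by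
  classical
  have hen : eastCount p (2*r+3) = r + 3 := by
    have := hp.2.1; omega
  have hex : ∃ t, t ≤ 2*r+3 ∧ eastCount p t = k := exists_eq p (by omega)
  refine ⟨Nat.find hex, (Nat.find_spec hex).1, (Nat.find_spec hex).2, ?_⟩
  intro t htlt
  by_contra hge
  push_neg at hge
  obtain ⟨t', ht'1, ht'2⟩ := exists_eq p hge
  have hmin := Nat.find_min hex (show t' < Nat.find hex by omega)
  have ht'' : t' ≤ 2*r+3 := le_trans ht'1 (le_trans (le_of_lt htlt) (Nat.find_spec hex).1)
  exact hmin ⟨ht'', ht'2⟩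

theorem eastCount_one {r : ℕ} {p : Fin (2*r+3) → Bool} (hp : PathP r p) :
    eastCount p 1 = 1 := by
  have hs := eastCount_succ p (show 0 < 2*r+3 by omega)
  rw [hp.1] at hs
  rw [hs, eastCount_zero]
  simp

theorem Scard_zero {r : ℕ} {p : Fin (2*r+3) → Bool} (hp : PathP r p) :
    Scard p 0 = 0 := by
  rw [Scard, Finset.card_eq_zero]
  rw [Finset.eq_empty_iff_forall_notMem]
  intro j hj
  rw [Finset.mem_filter] at hj
  obtain ⟨-, -, hle⟩ := hj
  have h1 : eastCount p 1 ≤ eastCount p (j.val+1) := eastCount_mono p (by omega)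
  rw [eastCount_one hp] at h1
  omega

theorem Scard_succ {n : ℕ} (p : Fin n → Bool) (K : ℕ) :
    Scard p (K+1) = Scard p K + compF p K := by
  classical
  have hu : Finset.univ.filter (fun j : Fin n => p j = false ∧ eastCount p (j.val+1) ≤ K+1)
      = Finset.univ.filter (fun j : Fin n => p j = false ∧ eastCount p (j.val+1) ≤ K)
        ∪ Finset.univ.filter (fun j : Fin n => p j = false ∧ eastCount p (j.val+1) = K+1) := by
    ext j
    simp only [Finset.mem_filter, Finset.mem_union, Finset.mem_univ, true_and]
    constructor
    · rintro ⟨h1, h2⟩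
      rcases Nat.lt_or_ge (eastCount p (j.val+1)) (K+1) with h | h
      · exact Or.inl ⟨h1, by omega⟩
      · exact Or.inr ⟨h1, by omega⟩
    · rintro (⟨h1, h2⟩ | ⟨h1, h2⟩) <;> exact ⟨h1, by omega⟩
  rw [Scard, Scard, compF, hu, Finset.card_union_of_disjoint]
  rw [Finset.disjoint_left]
  intro j hj1 hj2
  rw [Finset.mem_filter] at hj1 hj2
  omega

theorem sum_range_Scard {n : ℕ} (p : Fin n → Bool) (hz : Scard p 0 = 0) (K : ℕ) :
    ∑ k ∈ Finset.range K, compF p k = Scard p K := by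
  induction K with
  | zero => simpa using hz.symm
  | succ K ih => rw [Finset.sum_range_succ, ih, Scard_succ]

theorem sum_filter_le_fin {m : ℕ} (i : Fin m) (F : ℕ → ℕ) :
    ∑ j ∈ Finset.univ.filter (· ≤ i), F j.val = ∑ k ∈ Finset.range (i.val+1), F k := by
  apply Finset.sum_nbij' (i := fun (j : Fin m) => j.val)
    (j := fun k => if h : k < m then (⟨k, h⟩ : Fin m) else i)
  · intro a ha
    rw [Finset.mem_filter] at ha
    rw [Finset.mem_range]
    have := ha.2
    rw [Fin.le_def] at this
    omega
  · intro k hk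
    rw [Finset.mem_range] at hk
    have hkm : k < m := by omega
    rw [dif_pos hkm, Finset.mem_filter]
    exact ⟨Finset.mem_univ _, by rw [Fin.le_def]; simp; omega⟩
  · intro a ha
    rw [dif_pos a.isLt]
  · intro k hk
    rw [Finset.mem_range] at hk
    rw [dif_pos (show k < m by omega)]
  · intro a ha
    rfl


theorem false_count {r : ℕ} {p : Fin (2*r+3) → Bool} (hp : PathP r p) :
    (Finset.univ.filter (fun j : Fin (2*r+3) => p j = false)).card = r := by
  have h := countFalse p (le_refl (2*r+3))
  have hen : eastCount p (2*r+3) = r+3 := by have := hp.2.1; omega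
  have hfe : Finset.univ.filter (fun j : Fin (2*r+3) => j.val < 2*r+3 ∧ p j = false)
      = Finset.univ.filter (fun j : Fin (2*r+3) => p j = false) := by
    ext j
    simp only [Finset.mem_filter, Finset.mem_univ, true_and]
    exact ⟨fun h => h.2, fun h => ⟨j.isLt, h⟩⟩
  rw [hfe] at h
  omega

theorem Scard_top {r : ℕ} {p : Fin (2*r+3) → Bool} (hp : PathP r p) :
    Scard p (r+2) = r := by
  rw [Scard]
  have hfe : Finset.univ.filter
        (fun j : Fin (2*r+3) => p j = false ∧ eastCount p (j.val+1) ≤ r+2)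
      = Finset.univ.filter (fun j : Fin (2*r+3) => p j = false) := by
    ext j
    simp only [Finset.mem_filter, Finset.mem_univ, true_and]
    constructor
    · exact fun h => h.1
    · intro h
      refine ⟨h, ?_⟩
      have hs := eastCount_succ p j.isLt
      simp only [Fin.eta] at hs
      rw [h] at hs
      simp at hs
      obtain ⟨c0, c1, c2⟩ := path_bounds hp (show j.val ≤ 2*r+3 by omega)
      have := j.isLt
      omega
  rw [hfe, false_count hp]

theorem Scard_hit {r : ℕ} {p : Fin (2*r+3) → Bool} (hp : PathP r p) {k : ℕ}
    (hk1 : 1 ≤ k) (hk : k ≤ r+2) :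
    ∃ T, T ≤ 2*r+3 ∧ 1 ≤ T ∧ eastCount p (T-1) = k ∧ eastCount p T = k+1 ∧
      (∀ t < T, eastCount p t < k+1) ∧ Scard p k = T - 1 - k := by
  obtain ⟨T, hT1, hT2, hT3⟩ := hit hp (show k+1 ≤ r+3 by omega)
  have hT0 : 1 ≤ T := by
    by_contra h
    push_neg at h
    have hz : T = 0 := by omega
    rw [hz, eastCount_zero] at hT2
    omega
  have hprev : eastCount p (T-1) = k := by
    have h1 := hT3 (T-1) (by omega)
    have hs := eastCount_succ p (show T-1 < 2*r+3 by omega)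
    rw [show T-1+1 = T from by omega] at hs
    split at hs <;> omega
  have hsc : Scard p k = (T-1) - eastCount p (T-1) := by
    rw [Scard]
    have hfe : Finset.univ.filter
          (fun j : Fin (2*r+3) => p j = false ∧ eastCount p (j.val+1) ≤ k)
        = Finset.univ.filter (fun j : Fin (2*r+3) => j.val < T-1 ∧ p j = false) := by
      ext j
      simp only [Finset.mem_filter, Finset.mem_univ, true_and]
      constructor
      · rintro ⟨h1, h2⟩
        refine ⟨?_, h1⟩
        by_contra hge
        push_neg at hge
        have hmo : eastCount p T ≤ eastCount p (j.val+1) := eastCount_mono p (by omega)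
        omega
      · rintro ⟨h1, h2⟩
        refine ⟨h2, ?_⟩
        have hmo : eastCount p (j.val+1) ≤ eastCount p (T-1) := eastCount_mono p (by omega)
        omega
    rw [hfe, countFalse p (show T-1 ≤ 2*r+3 by omega)]
  exact ⟨T, hT1, hT0, hprev, hT2, hT3, by omega⟩

theorem Scard_bounds {r : ℕ} {p : Fin (2*r+3) → Bool} (hp : PathP r p) {k : ℕ}
    (hk1 : 1 ≤ k) (hk : k ≤ r+2) : k - 2 ≤ Scard p k ∧ Scard p k ≤ k := by
  obtain ⟨T, hT1, hT0, hprev, hcur, hmin, hval⟩ := Scard_hit hp hk1 hk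
  obtain ⟨a0, a1, a2⟩ := path_bounds hp (show T-1 ≤ 2*r+3 by omega)
  obtain ⟨b0, b1, b2⟩ := path_bounds hp hT1
  rw [hprev] at a0 a1 a2
  rw [hcur] at b0 b1 b2
  omega

theorem comp_mem {r : ℕ} {p : Fin (2*r+3) → Bool} (hp : PathP r p) :
    CompP r (compL r p) := by
  constructor
  · have h1 : ∑ j : Fin ((2*r+3) - r - 1), compL r p j
        = ∑ k ∈ Finset.range ((2*r+3) - r - 1), compF p k := by
      simp only [compL]
      exact Fin.sum_univ_eq_sum_range (fun k => compF p k) _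
    rw [h1, show (2*r+3) - r - 1 = r + 2 from by omega,
      sum_range_Scard p (Scard_zero hp) (r+2), Scard_top hp]
  · intro i
    have him : i.val < r+2 := by have := i.isLt; omega
    have hps : ∑ j ∈ Finset.univ.filter (· ≤ i), compL r p j = Scard p (i.val+1) := by
      simp only [compL]
      rw [sum_filter_le_fin i (compF p), sum_range_Scard p (Scard_zero hp)]
    rw [hps]
    obtain ⟨h1, h2⟩ := Scard_bounds hp (show 1 ≤ i.val+1 by omega)
      (show i.val+1 ≤ r+2 by omega)
    omega


theorem eastCount_le_final {r : ℕ} {p : Fin (2*r+3) → Bool} (hp : PathP r p)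
    {t : ℕ} (ht : t ≤ 2*r+3) : eastCount p t ≤ r + 3 := by
  have h1 : eastCount p t ≤ eastCount p (2*r+3) := eastCount_mono p ht
  have h2 := hp.2.1
  omega

theorem half_inj {r : ℕ} (hr : 1 ≤ r) {q q' : Fin (2*r+3) → Bool}
    (hq : PathP r q) (hq' : PathP r q')
    (hSS : ∀ k ≤ r+2, Scard q k = Scard q' k)
    {t : ℕ} (htn : t ≤ 2*r+3) (hlt : eastCount q t < eastCount q' t) : False := by
  set k := eastCount q t + 1 with hkdef
  have hk1 : 1 ≤ k := by omega
  have hkb : k ≤ r + 3 := by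
    have := eastCount_le_final hq' htn
    omega
  rcases Nat.lt_or_ge k 2 with hk2 | hk2
  · -- k = 1 : eastCount q t = 0 but t ≥ 1
    have hkone : k = 1 := by omega
    have ht1 : 1 ≤ t := by
      have := eastCount_le q' t
      omega
    have h1 : eastCount q 1 ≤ eastCount q t := eastCount_mono q ht1
    rw [eastCount_one hq] at h1
    omega
  · obtain ⟨T, hT1, hT0, hprev, hcur, hmin, hval⟩ :=
      Scard_hit hq (show 1 ≤ k - 1 by omega) (show k - 1 ≤ r+2 by omega)
    obtain ⟨T', hT'1, hT'0, hprev', hcur', hmin', hval'⟩ :=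
      Scard_hit hq' (show 1 ≤ k - 1 by omega) (show k - 1 ≤ r+2 by omega)
    rw [show k - 1 + 1 = k from by omega] at hcur hmin hcur' hmin'
    have heT : eastCount q (T-1) ≤ T - 1 := eastCount_le q (T-1)
    have heT' : eastCount q' (T'-1) ≤ T' - 1 := eastCount_le q' (T'-1)
    have hSeq := hSS (k-1) (by omega)
    have hTT : T = T' := by omega
    -- t < T since eastCount q t < k
    have htT : t < T := by
      by_contra hge
      push_neg at hge
      have := eastCount_mono q hge
      omega
    -- T' ≤ t since eastCount q' t ≥ k
    have htT' : T' ≤ t := by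
      by_contra hge
      push_neg at hge
      have := hmin' t hge
      omega
    omega

theorem compL_inj {r : ℕ} (hr : 1 ≤ r) {p p' : Fin (2*r+3) → Bool}
    (hp : PathP r p) (hp' : PathP r p') (h : compL r p = compL r p') : p = p' := by
  have hS : ∀ k, k ≤ r+2 → Scard p k = Scard p' k := by
    intro k hk
    rw [← sum_range_Scard p (Scard_zero hp) k, ← sum_range_Scard p' (Scard_zero hp') k]
    apply Finset.sum_congr rfl
    intro x hx
    rw [Finset.mem_range] at hx
    have hxm : x < (2*r+3) - r - 1 := by omega
    exact congrFun h ⟨x, hxm⟩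
  have key : ∀ t, t ≤ 2*r+3 → eastCount p t = eastCount p' t := by
    intro t ht
    rcases Nat.lt_trichotomy (eastCount p t) (eastCount p' t) with hlt | he | hlt
    · exact absurd (half_inj hr hp hp' hS ht hlt) not_false
    · exact he
    · exact absurd (half_inj hr hp' hp (fun k hk => (hS k hk).symm) ht hlt) not_false
  funext j
  have s1 := eastCount_succ p j.isLt
  have s2 := eastCount_succ p' j.isLt
  simp only [Fin.eta] at s1 s2
  have k1 := key j.val (by omega)
  have k2 := key (j.val+1) (by omega)
  cases hb : p j <;> cases hb' : p' j <;> rw [hb] at s1 <;> rw [hb'] at s2 <;>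
    simp at s1 s2 <;> first | rfl | (exfalso; omega)


def lFd (r : ℕ) (l : Fin ((2*r+3) - r - 1) → ℕ) : ℕ → ℕ :=
  fun k => if h : k < (2*r+3) - r - 1 then l ⟨k, h⟩ else 0

def PSfd (r : ℕ) (l : Fin ((2*r+3) - r - 1) → ℕ) : ℕ → ℕ :=
  fun k => ∑ j ∈ Finset.range k, lFd r l j

def posFd (r : ℕ) (l : Fin ((2*r+3) - r - 1) → ℕ) : ℕ → ℕ :=
  fun k => k + PSfd r l k

theorem PS_zero (r : ℕ) (l : Fin ((2*r+3) - r - 1) → ℕ) : PSfd r l 0 = 0 := by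
  simp [PSfd]

theorem PS_succ (r : ℕ) (l : Fin ((2*r+3) - r - 1) → ℕ) (k : ℕ) :
    PSfd r l (k+1) = PSfd r l k + lFd r l k := Finset.sum_range_succ _ _

theorem PS_mono (r : ℕ) (l : Fin ((2*r+3) - r - 1) → ℕ) {k k' : ℕ} (h : k ≤ k') :
    PSfd r l k ≤ PSfd r l k' := by
  apply Finset.sum_le_sum_of_subset
  intro x hx
  rw [Finset.mem_range] at hx ⊢
  omega

theorem PS_eq_partial (r : ℕ) (l : Fin ((2*r+3) - r - 1) → ℕ)
    (i : Fin ((2*r+3) - r - 1)) :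
    PSfd r l (i.val+1) = ∑ j ∈ Finset.univ.filter (· ≤ i), l j := by
  rw [show (∑ j ∈ Finset.univ.filter (· ≤ i), l j)
      = ∑ j ∈ Finset.univ.filter (· ≤ i), lFd r l j.val from by
    apply Finset.sum_congr rfl
    intro x _
    rw [lFd, dif_pos x.isLt]]
  rw [sum_filter_le_fin i (lFd r l)]
  rfl

theorem PS_le {r : ℕ} {l : Fin ((2*r+3) - r - 1) → ℕ} (hl : CompP r l)
    {K : ℕ} (hK : K ≤ r+2) : PSfd r l K ≤ K := by
  rcases Nat.eq_zero_or_pos K with h0 | hpos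
  · rw [h0, PS_zero]
  · have hKm : K - 1 < (2*r+3) - r - 1 := by omega
    have h1 := (hl.2 ⟨K-1, hKm⟩).2
    rw [← PS_eq_partial r l ⟨K-1, hKm⟩] at h1
    simpa [show K - 1 + 1 = K from by omega] using h1

theorem PS_ge {r : ℕ} {l : Fin ((2*r+3) - r - 1) → ℕ} (hl : CompP r l)
    {K : ℕ} (hK1 : 1 ≤ K) (hK : K ≤ r+2) : K ≤ PSfd r l K + 2 := by
  have hKm : K - 1 < (2*r+3) - r - 1 := by omega
  have h1 := (hl.2 ⟨K-1, hKm⟩).1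
  rw [← PS_eq_partial r l ⟨K-1, hKm⟩] at h1
  have : (⟨K-1, hKm⟩ : Fin ((2*r+3) - r - 1)).val = K - 1 := rfl
  rw [this, show K - 1 + 1 = K from by omega] at h1
  omega

theorem PS_total {r : ℕ} {l : Fin ((2*r+3) - r - 1) → ℕ} (hl : CompP r l) :
    PSfd r l (r+2) = r := by
  have h1 : ∑ j : Fin ((2*r+3) - r - 1), l j
      = ∑ k ∈ Finset.range ((2*r+3) - r - 1), lFd r l k := by
    rw [show (∑ j : Fin ((2*r+3) - r - 1), l j)
        = ∑ j : Fin ((2*r+3) - r - 1), lFd r l j.val from by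
      apply Finset.sum_congr rfl
      intro x _
      rw [lFd, dif_pos x.isLt]]
    exact Fin.sum_univ_eq_sum_range (fun k => lFd r l k) _
  have h2 := hl.1
  rw [h1, show (2*r+3) - r - 1 = r+2 from by omega] at h2
  exact h2

theorem posF_strict (r : ℕ) (l : Fin ((2*r+3) - r - 1) → ℕ) :
    StrictMono (posFd r l) := by
  apply strictMono_nat_of_lt_succ
  intro k
  show k + PSfd r l k < (k+1) + PSfd r l (k+1)
  have := PS_mono r l (show k ≤ k+1 by omega)
  omega

theorem posF_lt {r : ℕ} {l : Fin ((2*r+3) - r - 1) → ℕ} (hl : CompP r l)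
    {k : ℕ} (hk : k ≤ r+2) : posFd r l k < 2*r+3 := by
  have h1 : PSfd r l k ≤ PSfd r l (r+2) := PS_mono r l hk
  rw [PS_total hl] at h1
  show k + PSfd r l k < 2*r+3
  omega


def cntd (r : ℕ) (l : Fin ((2*r+3) - r - 1) → ℕ) (t : ℕ) : ℕ :=
  ((Finset.range (r+3)).filter (fun k => posFd r l k < t)).card

theorem cnt_zero (r : ℕ) (l : Fin ((2*r+3) - r - 1) → ℕ) : cntd r l 0 = 0 := by
  simp [cntd]

theorem cnt_le (r : ℕ) (l : Fin ((2*r+3) - r - 1) → ℕ) (t : ℕ) : cntd r l t ≤ r + 3 := by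
  have h := Finset.card_filter_le (Finset.range (r+3)) (fun k => posFd r l k < t)
  rw [Finset.card_range] at h
  exact h

theorem cnt_succ_mem (r : ℕ) (l : Fin ((2*r+3) - r - 1) → ℕ) {t : ℕ}
    (hex : ∃ k ∈ Finset.range (r+3), posFd r l k = t) :
    cntd r l (t+1) = cntd r l t + 1 := by
  classical
  obtain ⟨k0, hk0r, hk0⟩ := hex
  have hins : (Finset.range (r+3)).filter (fun k => posFd r l k < t+1)
      = insert k0 ((Finset.range (r+3)).filter (fun k => posFd r l k < t)) := by
    ext k
    simp only [Finset.mem_filter, Finset.mem_insert, Finset.mem_range]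
    constructor
    · rintro ⟨hkr, hlt⟩
      rcases Nat.lt_or_ge (posFd r l k) t with h | h
      · exact Or.inr ⟨hkr, h⟩
      · have : posFd r l k = posFd r l k0 := by omega
        exact Or.inl ((posF_strict r l).injective this)
    · rintro (rfl | ⟨hkr, hlt⟩)
      · exact ⟨Finset.mem_range.mp hk0r, by omega⟩
      · exact ⟨hkr, by omega⟩
  rw [cntd, cntd, hins, Finset.card_insert_of_notMem]
  rw [Finset.mem_filter]
  rintro ⟨-, hlt⟩
  omega

theorem cnt_succ_notmem (r : ℕ) (l : Fin ((2*r+3) - r - 1) → ℕ) {t : ℕ}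
    (hex : ¬ ∃ k ∈ Finset.range (r+3), posFd r l k = t) :
    cntd r l (t+1) = cntd r l t := by
  push_neg at hex
  rw [cntd, cntd]
  congr 1
  ext k
  simp only [Finset.mem_filter, Finset.mem_range]
  constructor
  · rintro ⟨hkr, hlt⟩
    have := hex k (Finset.mem_range.mpr hkr)
    exact ⟨hkr, by omega⟩
  · rintro ⟨hkr, hlt⟩
    exact ⟨hkr, by omega⟩

theorem cnt_ub (r : ℕ) (l : Fin ((2*r+3) - r - 1) → ℕ) {t : ℕ}
    (h : cntd r l t < r+3) : t ≤ posFd r l (cntd r l t) := by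
  by_contra hge
  push_neg at hge
  have hsub : Finset.range (cntd r l t + 1)
      ⊆ (Finset.range (r+3)).filter (fun k => posFd r l k < t) := by
    intro k hk
    rw [Finset.mem_range] at hk
    rw [Finset.mem_filter, Finset.mem_range]
    have hmono : posFd r l k ≤ posFd r l (cntd r l t) := (posF_strict r l).monotone (by omega)
    exact ⟨by omega, by omega⟩
  have := Finset.card_le_card hsub
  rw [Finset.card_range] at this
  have hc : cntd r l t = ((Finset.range (r+3)).filter (fun k => posFd r l k < t)).card := rfl
  omega

theorem cnt_lb (r : ℕ) (l : Fin ((2*r+3) - r - 1) → ℕ) {t : ℕ}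
    (h : 0 < cntd r l t) : posFd r l (cntd r l t - 1) < t := by
  by_contra hge
  push_neg at hge
  have hsub : (Finset.range (r+3)).filter (fun k => posFd r l k < t)
      ⊆ Finset.range (cntd r l t - 1) := by
    intro k hk
    rw [Finset.mem_filter] at hk
    rw [Finset.mem_range]
    by_contra hk'
    push_neg at hk'
    have hmono : posFd r l (cntd r l t - 1) ≤ posFd r l k := (posF_strict r l).monotone hk'
    omega
  have := Finset.card_le_card hsub
  rw [Finset.card_range] at this
  have hc : cntd r l t = ((Finset.range (r+3)).filter (fun k => posFd r l k < t)).card := rfl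
  omega

theorem cnt_at_pos (r : ℕ) (l : Fin ((2*r+3) - r - 1) → ℕ) {k : ℕ} (hk : k ≤ r+2) :
    cntd r l (posFd r l k + 1) = k + 1 := by
  rw [cntd]
  have hfe : (Finset.range (r+3)).filter (fun k' => posFd r l k' < posFd r l k + 1)
      = Finset.range (k+1) := by
    ext k'
    simp only [Finset.mem_filter, Finset.mem_range]
    constructor
    · rintro ⟨hkr, hlt⟩
      have : posFd r l k' ≤ posFd r l k := by omega
      have := ((posF_strict r l).le_iff_le).mp this
      omega
    · intro hk'
      have : posFd r l k' ≤ posFd r l k := (posF_strict r l).monotone (by omega)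
      exact ⟨by omega, by omega⟩
  rw [hfe, Finset.card_range]

theorem cnt_min (r : ℕ) (l : Fin ((2*r+3) - r - 1) → ℕ) {k t : ℕ}
    (ht : t ≤ posFd r l k) : cntd r l t ≤ k := by
  rw [cntd]
  have hsub : (Finset.range (r+3)).filter (fun k' => posFd r l k' < t)
      ⊆ Finset.range k := by
    intro k' hk'
    rw [Finset.mem_filter] at hk'
    rw [Finset.mem_range]
    by_contra hge
    push_neg at hge
    have := (posF_strict r l).monotone hge
    omega
  have := Finset.card_le_card hsub
  rw [Finset.card_range] at this
  exact this

theorem compL_surj {r : ℕ} (hr : 1 ≤ r) {l : Fin ((2*r+3) - r - 1) → ℕ}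
    (hl : CompP r l) : ∃ p : Fin (2*r+3) → Bool, PathP r p ∧ compL r p = l := by
  set p : Fin (2*r+3) → Bool :=
    fun j => decide (cntd r l (j.val+1) = cntd r l j.val + 1) with hpdef
  have hcnt : ∀ t, t ≤ 2*r+3 → eastCount p t = cntd r l t := by
    intro t
    induction t with
    | zero => intro _; rw [eastCount_zero, cnt_zero]
    | succ t ih =>
      intro ht
      have htn : t < 2*r+3 := ht
      have s1 := eastCount_succ p htn
      by_cases hex : ∃ k ∈ Finset.range (r+3), posFd r l k = t
      · have hpt : p ⟨t, htn⟩ = true := by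
          show decide (cntd r l (t+1) = cntd r l t + 1) = true
          rw [cnt_succ_mem r l hex]
          simp
        rw [s1, hpt, ih (by omega), cnt_succ_mem r l hex]
        simp
      · have hpt : p ⟨t, htn⟩ = false := by
          show decide (cntd r l (t+1) = cntd r l t + 1) = false
          rw [cnt_succ_notmem r l hex]
          simp
        rw [s1, hpt, ih (by omega), cnt_succ_notmem r l hex]
        simp
  have hen : eastCount p (2*r+3) = r+3 := by
    rw [hcnt (2*r+3) le_rfl, cntd]
    have hfe : (Finset.range (r+3)).filter (fun k => posFd r l k < 2*r+3)
        = Finset.range (r+3) := by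
      apply Finset.filter_true_of_mem
      intro k hk
      rw [Finset.mem_range] at hk
      exact posF_lt hl (by omega)
    rw [hfe, Finset.card_range]
  have hPath : PathP r p := by
    refine ⟨?_, by rw [hen]; omega, ?_⟩
    · have hex0 : ∃ k ∈ Finset.range (r+3), posFd r l k = 0 := by
        refine ⟨0, by simp, ?_⟩
        show 0 + PSfd r l 0 = 0
        rw [PS_zero]
      show decide (cntd r l (0+1) = cntd r l 0 + 1) = true
      rw [cnt_succ_mem r l hex0]
      simp
    · intro t ht
      rw [hcnt t ht]
      have hqle := cnt_le r l t
      constructor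
      · rcases Nat.lt_or_ge (cntd r l t) (r+3) with hlt | hge
        · have h1 := cnt_ub r l hlt
          have h2 : PSfd r l (cntd r l t) ≤ cntd r l t := PS_le hl (by omega)
          have h3 : posFd r l (cntd r l t) = cntd r l t + PSfd r l (cntd r l t) := rfl
          omega
        · omega
      · rcases Nat.eq_zero_or_pos (cntd r l t) with h0 | hpos
        · omega
        · have h1 := cnt_lb r l hpos
          have h3 : posFd r l (cntd r l t - 1)
              = (cntd r l t - 1) + PSfd r l (cntd r l t - 1) := rfl
          rcases Nat.lt_or_ge (cntd r l t) 2 with hq1 | hq2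
          · omega
          · have h2 : cntd r l t - 1 ≤ PSfd r l (cntd r l t - 1) + 2 :=
              PS_ge hl (by omega) (by omega)
            omega
  refine ⟨p, hPath, ?_⟩
  have hScard : ∀ k, k ≤ r+2 → Scard p k = PSfd r l k := by
    intro k hk
    rcases Nat.eq_zero_or_pos k with h0 | hpos
    · rw [h0, Scard_zero hPath, PS_zero]
    · obtain ⟨T, hT1, hT0, hprev, hcur, hmin, hval⟩ := Scard_hit hPath (by omega) hk
      have hpk : posFd r l k < 2*r+3 := posF_lt hl hk
      have hePos : eastCount p (posFd r l k + 1) = k+1 := by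
        rw [hcnt _ (by omega), cnt_at_pos r l hk]
      have heMin : ∀ t' < posFd r l k + 1, eastCount p t' < k+1 := by
        intro t' ht'
        rw [hcnt t' (by omega)]
        have := cnt_min r l (show t' ≤ posFd r l k by omega)
        omega
      have hTeq : T = posFd r l k + 1 := by
        rcases Nat.lt_trichotomy T (posFd r l k + 1) with h | h | h
        · have := heMin T h; omega
        · exact h
        · have := hmin (posFd r l k + 1) h; omega
      rw [hval, hTeq]
      have h3 : posFd r l k = k + PSfd r l k := rfl
      omega
  funext i
  have him : i.val < (2*r+3) - r - 1 := i.isLt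
  have h1 := Scard_succ p i.val
  have h2 := PS_succ r l i.val
  have h3 := hScard i.val (by omega)
  have h4 := hScard (i.val+1) (by omega)
  have h5 : lFd r l i.val = l i := by
    rw [lFd, dif_pos him]
  show compF p i.val = l i
  omega


theorem part2 (r : ℕ) (hr : 1 ≤ r) :
    Nat.card {p : Fin (2*r+3) → Bool // PathP r p}
      = Nat.card {l : Fin ((2*r+3) - r - 1) → ℕ // CompP r l} := by
  apply Nat.card_eq_of_bijective (fun x => ⟨compL r x.1, comp_mem x.2⟩)
  constructor
  · intro x y hxy
    exact Subtype.ext (compL_inj hr x.2 y.2 (congrArg Subtype.val hxy))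
  · rintro ⟨l, hlM⟩
    obtain ⟨p, hp, hcl⟩ := compL_surj hr hlM
    exact ⟨⟨p, hp⟩, Subtype.ext hcl⟩

end PCC

/-- For `n = 2r + 3` odd, `r ≥ 1`: the number of lattice paths from `(0,0)` to
`(n-r, r)` using North/East steps, staying weakly between `y = x` and `y = x - 3`,
starting with an East step, equals the number of maximal simplices of the circuit
triangulation of `Δ_{n,2}` (minimal circuits of `G_{n,2}`) all of whose vertices are
`r`-stable and whose maximal `r`-adjacent vertex is `ε_{{n,r}}`; and this number
equals the number of compositions `(λ₁, …, λ_{n-r-1})` of `r` into nonnegative parts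
with `i - 2 ≤ λ₁ + ⋯ + λᵢ ≤ i` for all `i`. -/
theorem path_count_eq_circuit_count_eq_composition_count (r : ℕ) (hr : 1 ≤ r) :
    Nat.card { p : Fin (2 * r + 3) → Bool //
        p ⟨0, by omega⟩ = true ∧
        eastCount p (2 * r + 3) = (2 * r + 3) - r ∧
        ∀ t ≤ 2 * r + 3,
          t - eastCount p t ≤ eastCount p t ∧
          eastCount p t ≤ (t - eastCount p t) + 3 } =
      Nat.card { c : Fin (2 * r + 3 + 1) → (ZMod (2 * r + 3) → Bool) //
        c 0 = chiPair (2 * r + 3) ((2 * r + 3 : ℕ) : ZMod (2 * r + 3))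
                ((((2 * r + 3 : ℕ) : ZMod (2 * r + 3))) + r) ∧
        c (Fin.last (2 * r + 3)) = c 0 ∧
        (∀ i : Fin (2 * r + 3), EdgeStep (2 * r + 3) (c i.castSucc) (c i.succ)) ∧
        (∀ i, RStableVert (2 * r + 3) r (c i)) ∧
        (∀ ℓ' ∈ Finset.Icc 1 (2 * r + 3),
          (∃ i, c i = chiPair (2 * r + 3) (ℓ' : ZMod (2 * r + 3))
                        ((ℓ' : ZMod (2 * r + 3)) + r)) → ℓ' ≤ 2 * r + 3) } ∧
    Nat.card { p : Fin (2 * r + 3) → Bool //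
        p ⟨0, by omega⟩ = true ∧
        eastCount p (2 * r + 3) = (2 * r + 3) - r ∧
        ∀ t ≤ 2 * r + 3,
          t - eastCount p t ≤ eastCount p t ∧
          eastCount p t ≤ (t - eastCount p t) + 3 } =
      Nat.card { l : Fin ((2 * r + 3) - r - 1) → ℕ //
        (∑ j, l j) = r ∧
        ∀ i : Fin ((2 * r + 3) - r - 1),
          (i : ℕ) ≤ (∑ j ∈ Finset.univ.filter (· ≤ i), l j) + 1 ∧
          (∑ j ∈ Finset.univ.filter (· ≤ i), l j) ≤ (i : ℕ) + 1 } := by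
  exact ⟨PCC.part1 r hr, PCC.part2 r hr⟩
end
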